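/- arXiv:2009.12209 — 10 statements merged into one kernel-verified Lean document; each statement's English description precedes it below -/
import Mathlib

section
/- If f = (V₀, V₁, V₂) is a restrained Italian dominating function of a graph G with V₂ = ∅, then G has size m ≥ (5/2)|V₀|, i.e., 2m ≥ 5|V₀|. -/
open scoped Classical
open Finset

/-- A restrained Italian dominating function: values in {0,1,2}, every 0-vertex has
neighborhood weight ≥ 2, and every 0-vertex has a 0-neighbor. -/
def IsRIDF {V : Type*} [Fintype V] (G : SimpleGraph V) (f : V → ℕ) : Prop :=
  (∀ v, f v ≤ 2) ∧
  (∀ v, f v = 0 → 2 ≤ ∑ u ∈ Finset.univ.filter (fun u => G.Adj v u), f u) ∧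
  (∀ v, f v = 0 → ∃ u, G.Adj v u ∧ f u = 0)

/-- The restrained Italian domination number. -/
noncomputable def ridNum {V : Type*} [Fintype V] (G : SimpleGraph V) : ℕ :=
  sInf {w | ∃ f : V → ℕ, IsRIDF G f ∧ ∑ v, f v = w}

/-- A restrained dominating set. -/
def IsRDS {V : Type*} [Fintype V] (G : SimpleGraph V) (S : Finset V) : Prop :=
  (∀ v ∉ S, ∃ u ∈ S, G.Adj v u) ∧ (∀ v ∉ S, ∃ u ∉ S, G.Adj v u)

/-- The restrained domination number. -/
noncomputable def rdNum {V : Type*} [Fintype V] (G : SimpleGraph V) : ℕ :=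
  sInf {k | ∃ S : Finset V, IsRDS G S ∧ S.card = k}
theorem stmt2 {V : Type*} [Fintype V] (G : SimpleGraph V) (f : V → ℕ)
    (hf : IsRIDF G f) (h2 : ∀ v, f v ≠ 2) :
    5 * (Finset.univ.filter (fun v => f v = 0)).card ≤ 2 * G.edgeFinset.card := by
  classical
  obtain ⟨hle, hsum, hres⟩ := hf
  have hval : ∀ v, f v = 0 ∨ f v = 1 := fun v => by have := hle v; have := h2 v; omega
  set V0 := Finset.univ.filter (fun v => f v = 0) with hV0
  set V1 := Finset.univ.filter (fun v => f v = 1) with hV1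
  set a : V → ℕ := fun v => (Finset.univ.filter (fun u => G.Adj v u ∧ f u = 0)).card with ha'
  set b : V → ℕ := fun v => (Finset.univ.filter (fun u => G.Adj v u ∧ f u = 1)).card with hb'
  have ha : ∀ v ∈ V0, 1 ≤ a v := by
    intro v hv
    simp only [hV0, mem_filter] at hv
    obtain ⟨u, hadj, hu0⟩ := hres v hv.2
    have hu : u ∈ Finset.univ.filter (fun u => G.Adj v u ∧ f u = 0) := by simp [hadj, hu0]
    exact Finset.card_pos.mpr ⟨u, hu⟩
  have hb : ∀ v ∈ V0, 2 ≤ b v := by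
    intro v hv
    simp only [hV0, mem_filter] at hv
    calc 2 ≤ ∑ u ∈ Finset.univ.filter (fun u => G.Adj v u), f u := hsum v hv.2
      _ = b v := by
          simp only [hb', Finset.card_filter, Finset.sum_filter]
          apply Finset.sum_congr rfl
          intro u _
          rcases hval u with h | h <;> by_cases hadj : G.Adj v u <;> simp [h, hadj]
  have hab : ∀ v, a v + b v ≤ G.degree v := by
    intro v
    have hdisj : Disjoint (Finset.univ.filter (fun u => G.Adj v u ∧ f u = 0))
        (Finset.univ.filter (fun u => G.Adj v u ∧ f u = 1)) := by
      rw [Finset.disjoint_left]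
      intro u h1 h2
      simp only [mem_filter] at h1 h2
      omega
    simp only [ha', hb']
    rw [← Finset.card_union_of_disjoint hdisj]
    apply Finset.card_le_card
    intro u hu
    simp only [Finset.mem_union, mem_filter] at hu
    rw [SimpleGraph.mem_neighborFinset]
    rcases hu with h | h <;> exact h.2.1
  -- double counting
  have key : ∑ v ∈ V0, b v = ∑ v ∈ V1, a v := by
    have e1 : ∑ v ∈ V0, b v
        = ∑ v : V, ∑ u : V, (if f v = 0 ∧ G.Adj v u ∧ f u = 1 then 1 else 0) := by
      rw [hV0, Finset.sum_filter]
      apply Finset.sum_congr rfl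
      intro v _
      by_cases h : f v = 0
      · simp only [h, if_true, true_and]
        simp only [hb', Finset.card_filter]
      · simp [h]
    have e2 : ∑ v ∈ V1, a v
        = ∑ u : V, ∑ v : V, (if f v = 0 ∧ G.Adj v u ∧ f u = 1 then 1 else 0) := by
      rw [hV1, Finset.sum_filter]
      apply Finset.sum_congr rfl
      intro u _
      by_cases h : f u = 1
      · simp only [h, and_true]
        simp only [ha', Finset.card_filter]
        apply Finset.sum_congr rfl
        intro v _
        have : G.Adj u v ↔ G.Adj v u := G.adj_comm u v
        by_cases h0 : f v = 0 <;> by_cases hadj : G.Adj v u <;>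
          simp [h0, hadj, this, h]
      · simp [h]
    rw [e1, e2, Finset.sum_comm]
  have hdisj01 : Disjoint V0 V1 := by
    rw [Finset.disjoint_left]
    intro v h1 h2
    simp only [hV0, hV1, mem_filter] at h1 h2
    omega
  have hdeg : ∑ v ∈ V0, G.degree v + ∑ v ∈ V1, G.degree v ≤ 2 * G.edgeFinset.card := by
    rw [← Finset.sum_union hdisj01, ← SimpleGraph.sum_degrees_eq_twice_card_edges]
    exact Finset.sum_le_sum_of_subset (Finset.subset_univ _)
  calc 5 * V0.card = ∑ v ∈ V0, 5 := by rw [Finset.sum_const, smul_eq_mul, mul_comm]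
    _ ≤ ∑ v ∈ V0, (a v + 2 * b v) := by
        apply Finset.sum_le_sum
        intro v hv
        have := ha v hv; have := hb v hv; omega
    _ = (∑ v ∈ V0, (a v + b v)) + ∑ v ∈ V0, b v := by
        rw [← Finset.sum_add_distrib]; apply Finset.sum_congr rfl; intros; ring
    _ = (∑ v ∈ V0, (a v + b v)) + ∑ v ∈ V1, a v := by rw [key]
    _ ≤ ∑ v ∈ V0, G.degree v + ∑ v ∈ V1, G.degree v := by
        gcongr with v hv v hv
        · exact hab v
        · exact le_trans (Nat.le_add_right _ _) (hab v)
    _ ≤ 2 * G.edgeFinset.card := hdeg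
end

section
/- For any connected graph G of order n ≥ 3 with m edges, γ_{rI}(G) ≥ min{γ_{rR}(G), n − 2m/5, n − (2m−5)/3}. -/
open scoped Classical
open Finset

/-- A restrained Roman dominating function. -/
def IsRRDF {V : Type*} [Fintype V] (G : SimpleGraph V) (f : V → ℕ) : Prop :=
  (∀ v, f v ≤ 2) ∧
  (∀ v, f v = 0 → ∃ u, G.Adj v u ∧ f u = 2) ∧
  (∀ v, f v = 0 → ∃ u, G.Adj v u ∧ f u = 0)

/-- The restrained Roman domination number. -/
noncomputable def rrdNum {V : Type*} [Fintype V] (G : SimpleGraph V) : ℕ :=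
  sInf {w | ∃ f : V → ℕ, IsRRDF G f ∧ ∑ v, f v = w}

/-!
Take an RID function `f` of minimum weight `w` and write `Vᵢ = f⁻¹(i)`. If every vertex of `V₀`
has a neighbour in `V₂`, then `f` is an RRD function and `γ_{rR} ≤ w`. Otherwise, every `v ∈ V₀`
has a neighbour in `V₀` and `d(v) ≥ 1` neighbours outside `V₀`, and `d(v) ≥ 2` whenever `v` has no
neighbour in `V₂`: this holds for some `x ∈ V₀`, and for all of `V₀` when `V₂ = ∅`. Counting ends
of edges, those leaving `V₀` once from each side, gives `2m ≥ |V₀| + 2 ∑_{v ∈ V₀} d(v)`; with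
`n + |V₂| = w + |V₀|` this yields `5n ≤ 2m + 5w` if `V₂ = ∅` and `3n + 5 ≤ 2m + 3w` otherwise.
-/

namespace SimpleGraph

variable {V : Type*} [Fintype V]

theorem card_add_two_mul_sum_card_adj_not_le (G : SimpleGraph V) (p : V → Prop)
    [DecidablePred p] (hp : ∀ v, p v → ∃ u, G.Adj v u ∧ p u) :
    #{v | p v} + 2 * ∑ v with p v, #{u | G.Adj v u ∧ ¬p u} ≤ 2 * #G.edgeFinset := by
  have hdeg : ∀ v, G.degree v = #{u | G.Adj v u ∧ p u} + #{u | G.Adj v u ∧ ¬p u} := fun v => by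
    rw [← card_neighborFinset_eq_degree, ← card_filter_add_card_filter_not p,
      neighborFinset_eq_filter, filter_filter, filter_filter]
  have hin : ∀ v, p v → 1 ≤ #{u | G.Adj v u ∧ p u} := fun v hv => by
    obtain ⟨u, huv, hu⟩ := hp v hv
    exact card_pos.2 ⟨u, by simp [huv, hu]⟩
  have hcount :
      ∑ v with p v, #{u | G.Adj v u ∧ ¬p u} = ∑ v with ¬p v, #{u | G.Adj v u ∧ p u} := by
    have := sum_card_bipartiteAbove_eq_sum_card_bipartiteBelow
      (s := {v | p v}) (t := {v | ¬p v}) G.Adj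
    simp only [bipartiteAbove, bipartiteBelow, filter_filter] at this
    convert this using 3 with v - v
    · simp only [and_comm]
    · simp only [G.adj_comm, and_comm]
  calc #{v | p v} + 2 * ∑ v with p v, #{u | G.Adj v u ∧ ¬p u}
      = ∑ v with p v, (1 + #{u | G.Adj v u ∧ ¬p u}) + ∑ v with ¬p v, #{u | G.Adj v u ∧ p u} := by
        rw [sum_add_distrib, ← hcount, card_eq_sum_ones]; ring
    _ ≤ ∑ v with p v, G.degree v + ∑ v with ¬p v, G.degree v := by
        gcongr with v hv v
        · rw [hdeg]; have := hin v (mem_filter.1 hv).2; omega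
        · rw [hdeg]; omega
    _ = 2 * #G.edgeFinset := by
        rw [sum_filter_add_sum_filter_not, sum_degrees_eq_twice_card_edges]

end SimpleGraph

theorem sum_le_mul_card_filter_ne_zero {α : Type*} {f : α → ℕ} (s : Finset α) {c : ℕ}
    (hc : ∀ u ∈ s, f u ≤ c) :
    ∑ u ∈ s, f u ≤ c * #{u ∈ s | f u ≠ 0} := by
  rw [← sum_filter_ne_zero, mul_comm, ← smul_eq_mul]
  exact sum_le_card_nsmul _ _ _ fun u hu => hc u (mem_filter.1 hu).1

section

variable {V : Type*} [Fintype V] {G : SimpleGraph V} {f : V → ℕ}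

theorem exists_isRIDF_sum_eq_ridNum (G : SimpleGraph V) :
    ∃ f, IsRIDF G f ∧ ∑ v, f v = ridNum G :=
  Nat.sInf_mem (⟨_, fun _ => 1, ⟨by simp, by simp, by simp⟩, rfl⟩ :
    {w | ∃ f : V → ℕ, IsRIDF G f ∧ ∑ v, f v = w}.Nonempty)

theorem IsRRDF.rrdNum_le_sum (hf : IsRRDF G f) : rrdNum G ≤ ∑ v, f v :=
  Nat.sInf_le ⟨f, hf, rfl⟩

theorem IsRIDF.isRRDF (hf : IsRIDF G f) (h2 : ∀ v, f v = 0 → ∃ u, G.Adj v u ∧ f u = 2) :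
    IsRRDF G f :=
  ⟨hf.1, h2, hf.2.2⟩

theorem card_add_card_eq_two_eq_sum_add_card_eq_zero (hf : ∀ v, f v ≤ 2) :
    Fintype.card V + #{v | f v = 2} = ∑ v, f v + #{v | f v = 0} := by
  rw [← card_univ, card_eq_sum_ones, card_filter, card_filter, ← sum_add_distrib,
    ← sum_add_distrib]
  refine sum_congr rfl fun v _ => ?_
  have := hf v
  interval_cases f v <;> simp

theorem IsRIDF.one_le_card_adj_ne_zero (hf : IsRIDF G f) {v : V} (hv : f v = 0) :
    1 ≤ #{u | G.Adj v u ∧ f u ≠ 0} := by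
  have := (hf.2.1 v hv).trans (sum_le_mul_card_filter_ne_zero _ fun u _ => hf.1 u)
  rw [filter_filter] at this
  omega

theorem IsRIDF.two_le_card_adj_ne_zero (hf : IsRIDF G f) {v : V} (hv : f v = 0)
    (hv2 : ∀ u, G.Adj v u → f u ≠ 2) : 2 ≤ #{u | G.Adj v u ∧ f u ≠ 0} := by
  have := (hf.2.1 v hv).trans (sum_le_mul_card_filter_ne_zero (c := 1) _ fun u hu =>
    Nat.le_of_lt_succ ((hf.1 u).lt_of_ne (hv2 u (mem_filter.1 hu).2)))
  rwa [filter_filter, one_mul] at this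

theorem IsRIDF.five_mul_card_le (hf : IsRIDF G f) (h2 : ∀ v, f v ≠ 2) :
    5 * Fintype.card V ≤ 2 * #G.edgeFinset + 5 * ∑ v, f v := by
  have hedges := G.card_add_two_mul_sum_card_adj_not_le (f · = 0) hf.2.2
  simp only [← ne_eq] at hedges
  have hout : #{v | f v = 0} • 2 ≤ ∑ v with f v = 0, #{u | G.Adj v u ∧ f u ≠ 0} :=
    card_nsmul_le_sum _ _ _ fun v hv =>
      hf.two_le_card_adj_ne_zero (mem_filter.1 hv).2 fun u _ => h2 u
  have hweight := card_add_card_eq_two_eq_sum_add_card_eq_zero hf.1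
  rw [filter_false_of_mem fun v _ => h2 v, card_empty] at hweight
  rw [smul_eq_mul] at hout
  omega

theorem IsRIDF.three_mul_card_add_five_le (hf : IsRIDF G f) (h2 : ∃ v, f v = 2) {x : V}
    (hx : f x = 0) (hx2 : ∀ u, G.Adj x u → f u ≠ 2) :
    3 * Fintype.card V + 5 ≤ 2 * #G.edgeFinset + 3 * ∑ v, f v := by
  have hedges := G.card_add_two_mul_sum_card_adj_not_le (f · = 0) hf.2.2
  simp only [← ne_eq] at hedges
  have hxS : x ∈ ({v | f v = 0} : Finset V) := by simp [hx]
  have hout : #{v | f v = 0} + 1 ≤ ∑ v with f v = 0, #{u | G.Adj v u ∧ f u ≠ 0} := by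
    rw [← add_sum_erase _ _ hxS]
    have hrest : #(({v | f v = 0} : Finset V).erase x) • 1 ≤
        ∑ v ∈ ({v | f v = 0} : Finset V).erase x, #{u | G.Adj v u ∧ f u ≠ 0} :=
      card_nsmul_le_sum _ _ _ fun v hv =>
        hf.one_le_card_adj_ne_zero (mem_filter.1 (mem_of_mem_erase hv)).2
    have hx_out := hf.two_le_card_adj_ne_zero hx hx2
    rw [smul_eq_mul, mul_one, card_erase_of_mem hxS] at hrest
    have hV₀_pos := card_pos.2 ⟨x, hxS⟩
    omega
  have hweight := card_add_card_eq_two_eq_sum_add_card_eq_zero hf.1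
  have hV₂_pos :=
    card_pos.2 (h2.imp fun v hv => by simp [hv] : ({v | f v = 2} : Finset V).Nonempty)
  omega

end

theorem stmt3_general {V : Type*} [Fintype V] (G : SimpleGraph V) :
    min (min (rrdNum G : ℚ) ((Fintype.card V : ℚ) - 2 * G.edgeFinset.card / 5))
      ((Fintype.card V : ℚ) - (2 * G.edgeFinset.card - 5) / 3) ≤ (ridNum G : ℚ) := by
  obtain ⟨f, hf, hw⟩ := exists_isRIDF_sum_eq_ridNum G
  rw [← hw]
  by_cases hR : ∀ v, f v = 0 → ∃ u, G.Adj v u ∧ f u = 2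
  · have : (rrdNum G : ℚ) ≤ ∑ v, f v := by exact_mod_cast (hf.isRRDF hR).rrdNum_le_sum
    exact (min_le_left _ _).trans ((min_le_left _ _).trans this)
  push Not at hR
  obtain ⟨x, hx, hx2⟩ := hR
  by_cases h2 : ∃ v, f v = 2
  · have : (3 * Fintype.card V + 5 : ℚ) ≤ 2 * #G.edgeFinset + 3 * ∑ v, f v := by
      exact_mod_cast hf.three_mul_card_add_five_le h2 hx hx2
    refine (min_le_right _ _).trans ?_
    linarith
  · push Not at h2
    have : (5 * Fintype.card V : ℚ) ≤ 2 * #G.edgeFinset + 5 * ∑ v, f v := by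
      exact_mod_cast hf.five_mul_card_le h2
    refine (min_le_left _ _).trans ((min_le_right _ _).trans ?_)
    linarith

theorem stmt3 {V : Type*} [Fintype V] (G : SimpleGraph V)
    (hc : G.Connected) (hn : 3 ≤ Fintype.card V) :
    min (min (rrdNum G : ℚ) ((Fintype.card V : ℚ) - 2 * G.edgeFinset.card / 5))
      ((Fintype.card V : ℚ) - (2 * G.edgeFinset.card - 5) / 3) ≤ (ridNum G : ℚ) :=
  stmt3_general G
end

section
/- For the path Pₙ with n ≥ 7, γ_{rI}(Pₙ) ≤ n − 1. -/
open scoped Classical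
open Finset

private def g : ℕ → ℕ
  | 0 => 2 | 1 => 0 | 2 => 0 | 3 => 2 | 4 => 0 | 5 => 0 | 6 => 2 | _ => 1

private lemma g_zero (k : ℕ) (h : g k = 0) : k = 1 ∨ k = 2 ∨ k = 4 ∨ k = 5 := by
  match k with
  | 0 | 1 | 2 | 3 | 4 | 5 | 6 => simp_all [g]
  | (m+7) => simp [g] at h

private lemma g_large (k : ℕ) (h : 7 ≤ k) : g k = 1 := by
  match k with
  | (m+7) => rfl
  | 0 | 1 | 2 | 3 | 4 | 5 | 6 => omega

private lemma g_le (k : ℕ) : g k ≤ 2 := by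
  match k with
  | 0 | 1 | 2 | 3 | 4 | 5 | 6 => simp [g]
  | (m+7) => simp [g]

private lemma sum_aux {n : ℕ} (v u : Fin n) (hadj : (SimpleGraph.pathGraph n).Adj v u)
    (hu : g u.val = 2) :
    2 ≤ ∑ w ∈ Finset.univ.filter (fun w => (SimpleGraph.pathGraph n).Adj v w), g w.val := by
  have h2 := Finset.single_le_sum (f := fun w : Fin n => g w.val)
    (fun i _ => Nat.zero_le _) (Finset.mem_filter.mpr ⟨Finset.mem_univ u, hadj⟩)
  exact hu ▸ h2

theorem stmt9 (n : ℕ) (hn : 7 ≤ n) : ridNum (SimpleGraph.pathGraph n) ≤ n - 1 := by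
  apply Nat.sInf_le
  refine ⟨fun i => g i.val, ⟨fun v => g_le _, ?_, ?_⟩, ?_⟩
  · intro v hv
    rcases g_zero _ hv with h | h | h | h
    · refine sum_aux v ⟨0, by omega⟩ ?_ (by show g 0 = 2; rfl)
      rw [SimpleGraph.pathGraph_adj]; simp; omega
    · refine sum_aux v ⟨3, by omega⟩ ?_ (by show g 3 = 2; rfl)
      rw [SimpleGraph.pathGraph_adj]; simp; omega
    · refine sum_aux v ⟨3, by omega⟩ ?_ (by show g 3 = 2; rfl)
      rw [SimpleGraph.pathGraph_adj]; simp; omega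
    · refine sum_aux v ⟨6, by omega⟩ ?_ (by show g 6 = 2; rfl)
      rw [SimpleGraph.pathGraph_adj]; simp; omega
  · intro v hv
    rcases g_zero _ hv with h | h | h | h
    · refine ⟨⟨2, by omega⟩, ?_, by show g 2 = 0; rfl⟩
      rw [SimpleGraph.pathGraph_adj]; simp; omega
    · refine ⟨⟨1, by omega⟩, ?_, by show g 1 = 0; rfl⟩
      rw [SimpleGraph.pathGraph_adj]; simp; omega
    · refine ⟨⟨5, by omega⟩, ?_, by show g 5 = 0; rfl⟩
      rw [SimpleGraph.pathGraph_adj]; simp; omega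
    · refine ⟨⟨4, by omega⟩, ?_, by show g 4 = 0; rfl⟩
      rw [SimpleGraph.pathGraph_adj]; simp; omega
  · rw [Fin.sum_univ_eq_sum_range]
    rw [← Finset.sum_range_add_sum_Ico _ hn]
    have h1 : ∑ k ∈ Finset.range 7, g k = 6 := by decide
    have h2 : ∑ k ∈ Finset.Ico 7 n, g k = n - 7 := by
      rw [Finset.sum_congr rfl (fun k hk => g_large k (Finset.mem_Ico.mp hk).1)]
      simp
    omega
end

section
/- If a connected graph G of order n contains two adjacent vertices u and v both of degree at least 3, then γ_{rI}(G) ≤ n − 2. -/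
open scoped Classical
open Finset

lemma aux_sum10 {V : Type*} [Fintype V] [DecidableEq V] (G : SimpleGraph V)
    (u v w : V) (hw : 3 ≤ G.degree w) (hwuv : w = u ∨ w = v) :
    2 ≤ ∑ x ∈ Finset.univ.filter (fun x => G.Adj w x),
        (if x = u ∨ x = v then 0 else 1 : ℕ) := by
  classical
  have hsub : (Finset.univ.filter (fun x => G.Adj w x)) \ {u, v} ⊆
      Finset.univ.filter (fun x => G.Adj w x) := Finset.sdiff_subset
  have hcard : 2 ≤ ((Finset.univ.filter (fun x => G.Adj w x)) \ {u, v}).card := by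
    set s := Finset.univ.filter (fun x => G.Adj w x) with hs
    have h1 : (s \ {u, v}).card + (s ∩ {u, v}).card = s.card :=
      Finset.card_sdiff_add_card_inter s _
    have hwns : w ∉ s := by simp [hs]
    have hwm : w ∈ ({u, v} : Finset V) := by
      rcases hwuv with rfl | rfl <;> simp
    have hsub2 : s ∩ {u, v} ⊆ ({u, v} : Finset V).erase w := by
      intro x hx
      rw [Finset.mem_inter] at hx
      rw [Finset.mem_erase]
      exact ⟨fun h => hwns (h ▸ hx.1), hx.2⟩
    have h2 : (s ∩ {u, v}).card ≤ 1 := by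
      have := Finset.card_le_card hsub2
      have he : (({u, v} : Finset V).erase w).card = ({u, v} : Finset V).card - 1 :=
        Finset.card_erase_of_mem hwm
      have h22 : ({u, v} : Finset V).card ≤ 2 :=
        Finset.card_insert_le _ _ |>.trans (by simp)
      have h21 : 1 ≤ ({u, v} : Finset V).card := Finset.card_pos.mpr ⟨w, hwm⟩
      omega
    have h3 : s.card = G.degree w := by
      rw [SimpleGraph.degree, hs]; congr 1; ext x
      simp [SimpleGraph.mem_neighborFinset]
    omega
  calc 2 ≤ ((Finset.univ.filter (fun x => G.Adj w x)) \ {u, v}).card := hcard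
    _ = ∑ x ∈ (Finset.univ.filter (fun x => G.Adj w x)) \ {u, v}, (1:ℕ) := by simp
    _ = ∑ x ∈ (Finset.univ.filter (fun x => G.Adj w x)) \ {u, v},
          (if x = u ∨ x = v then 0 else 1 : ℕ) := by
        apply Finset.sum_congr rfl
        intro x hx
        simp only [Finset.mem_sdiff, Finset.mem_insert, Finset.mem_singleton] at hx
        rw [if_neg (by tauto)]
    _ ≤ ∑ x ∈ Finset.univ.filter (fun x => G.Adj w x),
          (if x = u ∨ x = v then 0 else 1 : ℕ) :=
        Finset.sum_le_sum_of_subset hsub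

theorem stmt10 {V : Type*} [Fintype V] (G : SimpleGraph V) (hc : G.Connected)
    (u v : V) (huv : G.Adj u v) (hu : 3 ≤ G.degree u) (hv : 3 ≤ G.degree v) :
    ridNum G ≤ Fintype.card V - 2 := by
  classical
  set f : V → ℕ := fun x => if x = u ∨ x = v then 0 else 1 with hf
  have hRIDF : IsRIDF G f := by
    refine ⟨fun w => by by_cases h : w = u ∨ w = v <;> simp [hf, h], ?_, ?_⟩
    · intro w hw
      have hcase : w = u ∨ w = v := by
        by_contra h; simp [hf, h] at hw
      rcases hcase with h | h
      · rw [h]; exact aux_sum10 G u v u hu (Or.inl rfl)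
      · rw [h]; exact aux_sum10 G u v v hv (Or.inr rfl)
    · intro w hw
      have hcase : w = u ∨ w = v := by
        by_contra h; simp [hf, h] at hw
      rcases hcase with h | h
      · rw [h]; exact ⟨v, huv, by simp [hf]⟩
      · rw [h]; exact ⟨u, huv.symm, by simp [hf]⟩
  have hsum : ∑ x, f x = Fintype.card V - 2 := by
    have hne : u ≠ v := huv.ne
    rw [hf]
    rw [Finset.sum_ite, Finset.sum_const, Finset.sum_const]
    simp only [smul_eq_mul, mul_zero, mul_one, zero_add]
    have h1 : Finset.univ.filter (fun x => x = u ∨ x = v) = {u, v} := by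
      ext x; simp
    rw [Finset.filter_not, Finset.card_sdiff_of_subset (Finset.filter_subset _ _), h1]
    rw [Finset.card_insert_of_notMem (by simp [hne]), Finset.card_singleton]
    rfl
  exact Nat.sInf_le ⟨f, hRIDF, hsum⟩
end

section
/- If a connected graph G of order n has diameter at least 9, then γ_{rI}(G) ≤ n − 2. -/
open scoped Classical
open Finset

theorem stmt11 {V : Type*} [Fintype V] (G : SimpleGraph V) (hc : G.Connected)
    (hd : 9 ≤ G.diam) :
    ridNum G ≤ Fintype.card V - 2 := by
  have : Nonempty V := hc.nonempty
  obtain ⟨u, v, huv⟩ := G.exists_dist_eq_diam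
  obtain ⟨p, hp⟩ := hc.exists_walk_length_eq_dist u v
  have hL : 9 ≤ p.length := by rw [hp, huv]; exact hd
  set g : ℕ → V := fun i => p.getVert i with hg
  have claim : ∀ d i, i + d ≤ p.length → G.dist (g i) (g (i + d)) ≤ d := by
    intro d
    induction d with
    | zero => simp
    | succ d ih =>
      intro i h
      have h1 : i + d < p.length := by omega
      have hadj := p.adj_getVert_succ h1
      have hd1 : G.dist (g (i + d)) (g (i + d + 1)) ≤ 1 := by
        simpa using G.dist_le hadj.toWalk
      calc G.dist (g i) (g (i + (d + 1)))
          = G.dist (g i) (g (i + d + 1)) := by ring_nf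
        _ ≤ G.dist (g i) (g (i + d)) + G.dist (g (i + d)) (g (i + d + 1)) :=
            hc.dist_triangle
        _ ≤ d + 1 := by have := ih i (by omega); omega
  have hne : ∀ i j, i < j → j ≤ p.length → g i ≠ g j := by
    intro i j hij hj hEq
    have d1 : G.dist u (g i) ≤ i := by
      have := claim i 0 (by omega); simpa [hg, p.getVert_zero] using this
    have d2 : G.dist (g j) v ≤ p.length - j := by
      have := claim (p.length - j) j (by omega)
      rw [Nat.add_sub_cancel' hj] at this
      simpa [hg, p.getVert_length] using this
    have tri : G.dist u v ≤ G.dist u (g i) + G.dist (g i) v := hc.dist_triangle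
    rw [hEq] at d1 tri
    have hL' : G.dist u v = p.length := hp.symm
    omega
  have key : ∀ i, i ≤ 9 → ∀ j, j ≤ 9 → (g i = g j ↔ i = j) := by
    intro i hi j hj
    constructor
    · intro h
      by_contra hij
      rcases Nat.lt_or_ge i j with hlt | hge
      · exact hne i j hlt (by omega) h
      · exact hne j i (by omega) (by omega) h.symm
    · rintro rfl; rfl
  have hadj : ∀ i, i < 9 → G.Adj (g i) (g (i + 1)) := by
    intro i hi; exact p.adj_getVert_succ (by omega)
  set f : V → ℕ := fun x =>
    if x = g 1 ∨ x = g 2 ∨ x = g 4 ∨ x = g 5 ∨ x = g 7 ∨ x = g 8 then 0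
    else if x = g 0 ∨ x = g 3 ∨ x = g 6 ∨ x = g 9 then 2 else 1 with hf
  have hfval : ∀ i, i < 10 → f (g i) = if i % 3 = 0 then 2 else 0 := by
    intro i hi
    interval_cases i <;> simp [hf, key]
  have hfzero : ∀ i, i = 1 ∨ i = 2 ∨ i = 4 ∨ i = 5 ∨ i = 7 ∨ i = 8 → f (g i) = 0 := by
    intro i hi
    have := hfval i (by omega)
    rcases hi with rfl|rfl|rfl|rfl|rfl|rfl <;> simpa using this
  have hftwo : ∀ i, i = 0 ∨ i = 3 ∨ i = 6 ∨ i = 9 → f (g i) = 2 := by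
    intro i hi
    have := hfval i (by omega)
    rcases hi with rfl|rfl|rfl|rfl <;> simpa using this
  have hsum2 : ∀ x, f x = 0 → 2 ≤ ∑ w ∈ Finset.univ.filter (fun w => G.Adj x w), f w := by
    intro x hx
    have hx' : x = g 1 ∨ x = g 2 ∨ x = g 4 ∨ x = g 5 ∨ x = g 7 ∨ x = g 8 := by
      by_contra h
      rw [hf] at hx
      simp only [h, if_false] at hx
      split_ifs at hx <;> omega
    have aux : ∀ (w : V), G.Adj x w → f w = 2 →
        2 ≤ ∑ w ∈ Finset.univ.filter (fun w => G.Adj x w), f w := by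
      intro w hw hfw
      have hmem : w ∈ Finset.univ.filter (fun w => G.Adj x w) := by simp [hw]
      calc 2 = f w := hfw.symm
        _ ≤ _ := Finset.single_le_sum (f := f) (fun i _ => Nat.zero_le _) hmem
    rcases hx' with rfl|rfl|rfl|rfl|rfl|rfl
    · exact aux (g 0) (hadj 0 (by omega)).symm (hftwo 0 (by tauto))
    · exact aux (g 3) (hadj 2 (by omega)) (hftwo 3 (by tauto))
    · exact aux (g 3) (hadj 3 (by omega)).symm (hftwo 3 (by tauto))
    · exact aux (g 6) (hadj 5 (by omega)) (hftwo 6 (by tauto))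
    · exact aux (g 6) (hadj 6 (by omega)).symm (hftwo 6 (by tauto))
    · exact aux (g 9) (hadj 8 (by omega)) (hftwo 9 (by tauto))
  have hzero : ∀ x, f x = 0 → ∃ w, G.Adj x w ∧ f w = 0 := by
    intro x hx
    have hx' : x = g 1 ∨ x = g 2 ∨ x = g 4 ∨ x = g 5 ∨ x = g 7 ∨ x = g 8 := by
      by_contra h
      rw [hf] at hx
      simp only [h, if_false] at hx
      split_ifs at hx <;> omega
    rcases hx' with rfl|rfl|rfl|rfl|rfl|rfl
    · exact ⟨g 2, hadj 1 (by omega), hfzero 2 (by tauto)⟩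
    · exact ⟨g 1, (hadj 1 (by omega)).symm, hfzero 1 (by tauto)⟩
    · exact ⟨g 5, hadj 4 (by omega), hfzero 5 (by tauto)⟩
    · exact ⟨g 4, (hadj 4 (by omega)).symm, hfzero 4 (by tauto)⟩
    · exact ⟨g 8, hadj 7 (by omega), hfzero 8 (by tauto)⟩
    · exact ⟨g 7, (hadj 7 (by omega)).symm, hfzero 7 (by tauto)⟩
  have hle2 : ∀ x, f x ≤ 2 := by
    intro x; rw [hf]; dsimp only; split_ifs <;> omega
  -- the sum
  set S : Finset V := (Finset.range 10).image g with hS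
  have hinj : Set.InjOn g (Finset.range 10) := by
    intro a ha b hb hab
    simp only [Finset.coe_range, Set.mem_Iio] at ha hb
    exact (key a (by omega) b (by omega)).mp hab
  have hcardS : S.card = 10 := by
    rw [hS, Finset.card_image_of_injOn hinj, Finset.card_range]
  have hn : 10 ≤ Fintype.card V := by
    calc 10 = S.card := hcardS.symm
      _ ≤ Fintype.card V := by simpa using Finset.card_le_card (Finset.subset_univ S)
  have hsumS : ∑ x ∈ S, f x = 8 := by
    rw [hS, Finset.sum_image (fun a ha b hb => hinj (by simpa using ha) (by simpa using hb))]
    have : ∀ i ∈ Finset.range 10, f (g i) = if i % 3 = 0 then 2 else 0 := by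
      intro i hi; exact hfval i (by simpa using hi)
    rw [Finset.sum_congr rfl this]
    decide
  have hout : ∀ x ∈ Finset.univ \ S, f x = 1 := by
    intro x hx
    simp only [Finset.mem_sdiff, hS, Finset.mem_image, Finset.mem_range] at hx
    obtain ⟨-, hx⟩ := hx
    push_neg at hx
    rw [hf]
    have h0 := hx 0 (by omega); have h1 := hx 1 (by omega)
    have h2 := hx 2 (by omega); have h3 := hx 3 (by omega)
    have h4 := hx 4 (by omega); have h5 := hx 5 (by omega)
    have h6 := hx 6 (by omega); have h7 := hx 7 (by omega)
    have h8 := hx 8 (by omega); have h9 := hx 9 (by omega)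
    simp only []
    rw [if_neg, if_neg]
    · push_neg
      exact ⟨fun h => h0 h.symm, fun h => h3 h.symm, fun h => h6 h.symm,
        fun h => h9 h.symm⟩
    · push_neg
      exact ⟨fun h => h1 h.symm, fun h => h2 h.symm, fun h => h4 h.symm,
        fun h => h5 h.symm, fun h => h7 h.symm, fun h => h8 h.symm⟩
  have hsumtot : ∑ x, f x = Fintype.card V - 2 := by
    have hsplit : ∑ x ∈ Finset.univ \ S, f x + ∑ x ∈ S, f x = ∑ x, f x :=
      Finset.sum_sdiff (Finset.subset_univ S)
    have hout' : ∑ x ∈ Finset.univ \ S, f x = Fintype.card V - 10 := by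
      rw [Finset.sum_congr rfl hout]
      simp [Finset.card_sdiff_of_subset (Finset.subset_univ S), hcardS]
    omega
  exact Nat.sInf_le ⟨f, ⟨hle2, hsum2, hzero⟩, hsumtot⟩
end

section
/- If a connected graph G of order n contains vertices u and v with distance d(u,v) = 4, deg(u) ≥ 3, and deg(v) ≥ 2, then γ_{rI}(G) ≤ n − 2. -/
/-!
Take a geodesic `u x₁ x₂ x₃ v` and a neighbour `y ≠ x₃` of `v`. Give weight 2 to `x₂` and `y`,
weight 0 to `u, x₁, x₃, v` and weight 1 to every other vertex, for a total of `(n - 6) + 4 = n - 2`.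
The 0-vertices are paired by the edges `u x₁` and `x₃ v`; `x₁`, `x₃` and `v` each see a 2, and `u`,
which is not adjacent to `x₃` or `v`, has at least `deg u - 1 ≥ 2` neighbours of positive weight.
-/

open scoped Classical
open Finset

namespace SimpleGraph

variable {V : Type*} {G : SimpleGraph V} {u v : V}

lemma exists_adj_dist_eq_of_dist_eq_succ {n : ℕ} (h : G.dist u v = n + 1) :
    ∃ w, G.Adj w v ∧ G.dist u w = n := by
  have hreach : G.Reachable v u := (Reachable.of_dist_ne_zero (by omega)).symm
  obtain ⟨p, hp⟩ := hreach.exists_walk_length_eq_dist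
  rw [dist_comm, h] at hp
  cases p with
  | nil => simp at hp
  | @cons _ w _ hvw q =>
    rw [Walk.length_cons, add_left_inj] at hp
    have hle : G.dist u w ≤ n := by
      rw [dist_comm]
      exact hp ▸ dist_le q
    have := hvw.symm.diff_dist_adj (u := u)
    exact ⟨w, hvw.symm, by omega⟩

lemma exists_adj_ne_of_one_lt_degree [Fintype (G.neighborSet v)] (h : 1 < G.degree v) (x : V) :
    ∃ y, G.Adj v y ∧ y ≠ x := by
  rw [← card_neighborFinset_eq_degree] at h
  obtain ⟨y, hy, hyx⟩ := exists_mem_ne h x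
  exact ⟨y, (mem_neighborFinset G v y).1 hy, hyx⟩

lemma degree_le_card_neighborFinset_sdiff_add_one [Fintype (G.neighborSet v)] [DecidableEq V]
    {S : Finset V} {x : V} (h : ∀ w ∈ S, G.Adj v w → w = x) :
    G.degree v ≤ #(G.neighborFinset v \ S) + 1 := by
  have hsub : G.neighborFinset v ∩ S ⊆ {x} := fun w hw => by
    rw [mem_inter, mem_neighborFinset] at hw
    exact mem_singleton.2 (h w hw.2 hw.1)
  have := (card_le_card hsub).trans_eq (card_singleton x)
  have := card_sdiff_add_card_inter (G.neighborFinset v) S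
  rw [card_neighborFinset_eq_degree] at this
  omega

end SimpleGraph

open SimpleGraph

lemma ridNum_le_sum {V : Type*} [Fintype V] {G : SimpleGraph V} {f : V → ℕ} (hf : IsRIDF G f) :
    ridNum G ≤ ∑ v, f v :=
  Nat.sInf_le ⟨f, hf, rfl⟩

section TernaryFun

variable {V : Type*} {V₀ V₂ : Finset V} {w : V}

/-- The function written `f = (V₀, V₁, V₂)` in the paper, with `V₁` the remaining vertices. -/
noncomputable def ternaryFun (V₀ V₂ : Finset V) (w : V) : ℕ :=
  if w ∈ V₂ then 2 else if w ∈ V₀ then 0 else 1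

lemma ternaryFun_le_two : ternaryFun V₀ V₂ w ≤ 2 := by
  unfold ternaryFun; split_ifs <;> omega

lemma ternaryFun_eq_two (hw : w ∈ V₂) : ternaryFun V₀ V₂ w = 2 := if_pos hw

lemma ternaryFun_eq_zero_iff (h : Disjoint V₀ V₂) : ternaryFun V₀ V₂ w = 0 ↔ w ∈ V₀ := by
  unfold ternaryFun
  by_cases h₂ : w ∈ V₂
  · simp [h₂, disjoint_right.1 h h₂]
  · by_cases h₀ : w ∈ V₀ <;> simp [h₂, h₀]

lemma one_le_ternaryFun (hw : w ∉ V₀) : 1 ≤ ternaryFun V₀ V₂ w := by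
  unfold ternaryFun; split_ifs <;> omega

lemma sum_ternaryFun_add_card [Fintype V] (h : Disjoint V₀ V₂) :
    ∑ w, ternaryFun V₀ V₂ w + #V₀ = Fintype.card V + #V₂ := by
  have hpoint : ∀ w, ternaryFun V₀ V₂ w + (if w ∈ V₀ then 1 else 0) =
      1 + (if w ∈ V₂ then 1 else 0) := by
    intro w
    unfold ternaryFun
    by_cases h₂ : w ∈ V₂
    · simp [h₂, disjoint_right.1 h h₂]
    · by_cases h₀ : w ∈ V₀ <;> simp [h₂, h₀]
  simpa [sum_add_distrib, sum_boole] using sum_congr (s₁ := univ) rfl fun w _ => hpoint w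

lemma isRIDF_ternaryFun [Fintype V] (G : SimpleGraph V) (h : Disjoint V₀ V₂)
    (hzero : ∀ z ∈ V₀, ∃ w ∈ V₀, G.Adj z w)
    (hweight : ∀ z ∈ V₀, (∃ t ∈ V₂, G.Adj z t) ∨ 2 ≤ #(G.neighborFinset z \ V₀)) :
    IsRIDF G (ternaryFun V₀ V₂) := by
  refine ⟨fun _ => ternaryFun_le_two, fun z hz => ?_, fun z hz => ?_⟩
  · rw [ternaryFun_eq_zero_iff h] at hz
    rcases hweight z hz with ⟨t, ht, hzt⟩ | hcard
    · calc 2 = ternaryFun V₀ V₂ t := (ternaryFun_eq_two ht).symm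
        _ ≤ _ := single_le_sum (fun _ _ => Nat.zero_le _) (by simpa using hzt)
    · calc 2 ≤ #(G.neighborFinset z \ V₀) := hcard
        _ = ∑ w ∈ G.neighborFinset z \ V₀, 1 := card_eq_sum_ones _
        _ ≤ ∑ w ∈ G.neighborFinset z \ V₀, ternaryFun V₀ V₂ w :=
          sum_le_sum fun w hw => one_le_ternaryFun (mem_sdiff.1 hw).2
        _ ≤ _ := sum_le_sum_of_subset (fun w hw => by simpa using (mem_sdiff.1 hw).1)
  · rw [ternaryFun_eq_zero_iff h] at hz
    obtain ⟨w, hw, hzw⟩ := hzero z hz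
    exact ⟨w, hzw, (ternaryFun_eq_zero_iff h).2 hw⟩

lemma ridNum_add_card_le [Fintype V] (G : SimpleGraph V) (h : Disjoint V₀ V₂)
    (hzero : ∀ z ∈ V₀, ∃ w ∈ V₀, G.Adj z w)
    (hweight : ∀ z ∈ V₀, (∃ t ∈ V₂, G.Adj z t) ∨ 2 ≤ #(G.neighborFinset z \ V₀)) :
    ridNum G + #V₀ ≤ Fintype.card V + #V₂ := by
  have := ridNum_le_sum (isRIDF_ternaryFun G h hzero hweight)
  have := sum_ternaryFun_add_card h
  omega

end TernaryFun

lemma ridNum_le_card_sub_two_of_geodesic {V : Type*} [Fintype V] (G : SimpleGraph V)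
    {u x₁ x₂ x₃ v y : V} (hx₁ : G.dist u x₁ = 1) (hx₂ : G.dist u x₂ = 2) (hx₃ : G.dist u x₃ = 3)
    (hv : G.dist u v = 4) (hy : 3 ≤ G.dist u y) (hx₁x₂ : G.Adj x₁ x₂) (hx₂x₃ : G.Adj x₂ x₃)
    (hx₃v : G.Adj x₃ v) (hvy : G.Adj v y) (hyx₃ : y ≠ x₃) (hu : 3 ≤ G.degree u) :
    ridNum G ≤ Fintype.card V - 2 := by
  have hu₀ : G.dist u u = 0 := dist_self
  have hux₁ : G.Adj u x₁ := dist_eq_one_iff_adj.1 hx₁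
  set V₀ : Finset V := {u, x₁, x₃, v}
  set V₂ : Finset V := {x₂, y}
  have hdisj : Disjoint V₀ V₂ := by
    simp only [V₀, V₂, disjoint_insert_left, disjoint_singleton_left, mem_insert, mem_singleton,
      not_or]
    refine ⟨⟨?_, ?_⟩, ⟨?_, ?_⟩, ⟨?_, hyx₃.symm⟩, ⟨?_, hvy.ne⟩⟩ <;>
      exact ne_of_apply_ne (G.dist u) (by omega)
  have hV₀ : 4 ≤ #V₀ :=
    calc 4 = #(V₀.image (G.dist u)) := by simp [V₀, hx₁, hx₃, hv]
      _ ≤ #V₀ := card_image_le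
  have hV₂ : #V₂ ≤ 2 := card_le_two
  have hzero : ∀ z ∈ V₀, ∃ w ∈ V₀, G.Adj z w := by
    intro z hz
    simp only [V₀, mem_insert, mem_singleton] at hz
    rcases hz with h | h | h | h <;> subst z
    exacts [⟨x₁, by simp [V₀], hux₁⟩, ⟨u, by simp [V₀], hux₁.symm⟩, ⟨v, by simp [V₀], hx₃v⟩,
      ⟨x₃, by simp [V₀], hx₃v.symm⟩]
  have hu₂ : G.degree u ≤ #(G.neighborFinset u \ V₀) + 1 := by
    refine degree_le_card_neighborFinset_sdiff_add_one (x := x₁) ?_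
    simp only [V₀, mem_insert, mem_singleton, forall_eq_or_imp, forall_eq, implies_true,
      true_and]
    refine ⟨fun h => (G.irrefl h).elim, fun h => ?_, fun h => ?_⟩ <;>
      · have := dist_eq_one_iff_adj.2 h; omega
  have hweight : ∀ z ∈ V₀, (∃ t ∈ V₂, G.Adj z t) ∨ 2 ≤ #(G.neighborFinset z \ V₀) := by
    intro z hz
    simp only [V₀, mem_insert, mem_singleton] at hz
    rcases hz with h | h | h | h <;> subst z
    exacts [Or.inr (by omega), Or.inl ⟨x₂, by simp [V₂], hx₁x₂⟩,
      Or.inl ⟨x₂, by simp [V₂], hx₂x₃.symm⟩, Or.inl ⟨y, by simp [V₂], hvy⟩]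
  have := ridNum_add_card_le G hdisj hzero hweight
  omega

theorem stmt12_general {V : Type*} [Fintype V] (G : SimpleGraph V)
    (u v : V) (hd : G.dist u v = 4) (hu : 3 ≤ G.degree u) (hv : 2 ≤ G.degree v) :
    ridNum G ≤ Fintype.card V - 2 := by
  obtain ⟨x₃, hx₃v, hx₃⟩ := exists_adj_dist_eq_of_dist_eq_succ (n := 3) hd
  obtain ⟨x₂, hx₂x₃, hx₂⟩ := exists_adj_dist_eq_of_dist_eq_succ (n := 2) hx₃
  obtain ⟨x₁, hx₁x₂, hx₁⟩ := exists_adj_dist_eq_of_dist_eq_succ (n := 1) hx₂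
  obtain ⟨y, hvy, hyx₃⟩ := exists_adj_ne_of_one_lt_degree hv x₃
  have hy : 3 ≤ G.dist u y := by
    rcases hvy.diff_dist_adj (u := u) with h | h | h <;> omega
  exact ridNum_le_card_sub_two_of_geodesic G hx₁ hx₂ hx₃ hd hy hx₁x₂ hx₂x₃ hx₃v hvy hyx₃ hu

theorem stmt12 {V : Type*} [Fintype V] (G : SimpleGraph V) (hc : G.Connected)
    (u v : V) (hd : G.dist u v = 4) (hu : 3 ≤ G.degree u) (hv : 2 ≤ G.degree v) :
    ridNum G ≤ Fintype.card V - 2 :=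
  stmt12_general G u v hd hu hv
end

section
/- For a connected graph G of order n ≥ 2, γ_{rI}(G) = 2 if and only if G is isomorphic to P₂, or G can be obtained from a complete bipartite graph with partite sets X and Y where |X| ∈ {1,2} and |Y| ≥ 2 by adding edges among Y so that the induced subgraph on Y has minimum degree at least 1. -/
open scoped Classical
open Finset

lemma sum_two_cases {V : Type*} [Fintype V] (f : V → ℕ) (hsum : ∑ v, f v = 2) :
    (∃ x, f x = 2 ∧ ∀ v, v ≠ x → f v = 0) ∨
    (∃ x x', x ≠ x' ∧ f x = 1 ∧ f x' = 1 ∧ ∀ v, v ≠ x → v ≠ x' → f v = 0) := by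
  by_cases h2 : ∃ x, f x = 2
  · obtain ⟨x, hx⟩ := h2
    left
    refine ⟨x, hx, fun v hv => ?_⟩
    have hsub : ({x, v} : Finset V) ⊆ univ := subset_univ _
    have := Finset.sum_le_sum_of_subset (f := f) hsub
    rw [Finset.sum_pair (Ne.symm hv), hsum, hx] at this
    omega
  · right
    push_neg at h2
    set s : Finset V := univ.filter (fun v => f v ≠ 0) with hs
    have hsum' : ∑ v ∈ s, f v = 2 := by
      rw [hs, Finset.sum_filter_ne_zero, hsum]
    have hone : ∀ v ∈ s, f v = 1 := by
      intro v hv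
      have h0 : f v ≠ 0 := (Finset.mem_filter.mp hv).2
      have hle : f v ≤ 2 := by
        calc f v ≤ ∑ u ∈ s, f u := Finset.single_le_sum (fun i _ => Nat.zero_le _) hv
        _ = 2 := hsum'
      have := h2 v
      omega
    have hcard : s.card = 2 := by
      have : ∑ v ∈ s, f v = s.card := by
        rw [Finset.sum_congr rfl hone]; simp
      omega
    obtain ⟨x, x', hne, hxx⟩ := Finset.card_eq_two.mp hcard
    refine ⟨x, x', hne, hone x (by simp [hxx]), hone x' (by simp [hxx]), fun v hv1 hv2 => ?_⟩
    by_contra h0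
    have : v ∈ s := by simp [hs, h0]
    rw [hxx] at this
    simp at this
    tauto

lemma ridf_lower {V : Type*} [Fintype V] (G : SimpleGraph V) (hn : 2 ≤ Fintype.card V)
    (f : V → ℕ) (hf : IsRIDF G f) : 2 ≤ ∑ v, f v := by
  by_contra h
  push_neg at h
  -- there is a vertex with f v = 0
  obtain ⟨a, b, hab⟩ := Fintype.exists_pair_of_one_lt_card hn
  have hex : ∃ v, f v = 0 := by
    by_contra hno
    push_neg at hno
    have h1 : 1 ≤ f a := Nat.one_le_iff_ne_zero.mpr (hno a)
    have h2 : 1 ≤ f b := Nat.one_le_iff_ne_zero.mpr (hno b)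
    have hsub : ({a, b} : Finset V) ⊆ univ := subset_univ _
    have := Finset.sum_le_sum_of_subset (f := f) hsub
    rw [Finset.sum_pair hab] at this
    omega
  obtain ⟨v, hv⟩ := hex
  have h2 := hf.2.1 v hv
  have hle : ∑ u ∈ univ.filter (fun u => G.Adj v u), f u ≤ ∑ u, f u :=
    Finset.sum_le_sum_of_subset (Finset.filter_subset _ _)
  omega

theorem stmt13 {V : Type*} [Fintype V] (G : SimpleGraph V) (hc : G.Connected)
    (hn : 2 ≤ Fintype.card V) :
    ridNum G = 2 ↔
      (Nonempty (G ≃g SimpleGraph.pathGraph 2) ∨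
        ∃ X Y : Finset V, Disjoint X Y ∧ X ∪ Y = Finset.univ ∧
          (X.card = 1 ∨ X.card = 2) ∧ 2 ≤ Y.card ∧
          (∀ x ∈ X, ∀ y ∈ Y, G.Adj x y) ∧
          (∀ x ∈ X, ∀ x' ∈ X, ¬ G.Adj x x') ∧
          (∀ y ∈ Y, ∃ y' ∈ Y, G.Adj y y')) := by
  constructor
  · intro hrid
    -- get a minimum RIDF of weight 2
    have hne : {w | ∃ f : V → ℕ, IsRIDF G f ∧ ∑ v, f v = w}.Nonempty := by
      by_contra hemp
      rw [Set.not_nonempty_iff_eq_empty] at hemp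
      rw [ridNum, hemp, Nat.sInf_empty] at hrid
      omega
    have hmem := Nat.sInf_mem hne
    rw [show sInf {w | ∃ f : V → ℕ, IsRIDF G f ∧ ∑ v, f v = w} = ridNum G from rfl, hrid] at hmem
    obtain ⟨f, hf, hsum⟩ := hmem
    rcases sum_two_cases f hsum with ⟨x, hx2, hrest⟩ | ⟨x, x', hxx', hx1, hx'1, hrest⟩
    · -- case A: f x = 2
      right
      refine ⟨{x}, univ.erase x, ?_, ?_, Or.inl (by simp), ?_, ?_, ?_, ?_⟩
      · simp
      · ext a; by_cases h : a = x <;> simp [h]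
      · -- |Y| ≥ 2
        have hx0 : ∃ y, y ≠ x := by
          obtain ⟨a, b, hab⟩ := Fintype.exists_pair_of_one_lt_card hn
          by_cases ha : a = x
          · exact ⟨b, by rw [← ha]; exact hab.symm⟩
          · exact ⟨a, ha⟩
        obtain ⟨y, hy⟩ := hx0
        obtain ⟨u, hadj, hu0⟩ := hf.2.2 y (hrest y hy)
        have hux : u ≠ x := fun h => by rw [h, hx2] at hu0; omega
        have huy : u ≠ y := fun h => G.irrefl (h ▸ hadj).symm
        exact Finset.one_lt_card.mpr ⟨y, by simp [hy], u, by simp [hux], huy.symm⟩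
      · -- complete bipartite
        intro a ha y hy
        rw [Finset.mem_singleton] at ha
        rw [ha]
        rw [Finset.mem_erase] at hy
        have hy0 : f y = 0 := hrest y hy.1
        have h2 := hf.2.1 y hy0
        by_contra hadj
        have : ∑ u ∈ univ.filter (fun u => G.Adj y u), f u = 0 := by
          apply Finset.sum_eq_zero
          intro u hu
          rw [Finset.mem_filter] at hu
          have : u ≠ x := fun h => hadj ((h ▸ hu.2).symm)
          exact hrest u this
        omega
      · intro a ha b hb
        rw [Finset.mem_singleton] at ha hb
        rw [ha, hb]
        exact G.irrefl
      · intro y hy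
        rw [Finset.mem_erase] at hy
        obtain ⟨u, hadj, hu0⟩ := hf.2.2 y (hrest y hy.1)
        have hux : u ≠ x := fun h => by rw [h, hx2] at hu0; omega
        exact ⟨u, by simp [hux], hadj⟩
    · -- case B: f x = f x' = 1
      -- every vertex outside {x, x'} is adjacent to both x and x'
      have hboth : ∀ v, v ≠ x → v ≠ x' → G.Adj v x ∧ G.Adj v x' := by
        intro v hv1 hv2
        have hv0 : f v = 0 := hrest v hv1 hv2
        have h2 := hf.2.1 v hv0
        constructor
        · by_contra hadj
          have : ∑ u ∈ univ.filter (fun u => G.Adj v u), f u ≤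
              ∑ u ∈ univ.filter (fun u => G.Adj v u), (if u = x' then 1 else 0) := by
            apply Finset.sum_le_sum
            intro u hu
            rw [Finset.mem_filter] at hu
            have hux : u ≠ x := fun h => hadj (h ▸ hu.2)
            by_cases h : u = x'
            · simp [h, hx'1]
            · simp [h, hrest u hux h]
          rw [Finset.sum_ite_eq' _ x' (fun _ => 1)] at this
          split_ifs at this <;> omega
        · by_contra hadj
          have : ∑ u ∈ univ.filter (fun u => G.Adj v u), f u ≤
              ∑ u ∈ univ.filter (fun u => G.Adj v u), (if u = x then 1 else 0) := by
            apply Finset.sum_le_sum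
            intro u hu
            rw [Finset.mem_filter] at hu
            have hux : u ≠ x' := fun h => hadj (h ▸ hu.2)
            by_cases h : u = x
            · simp [h, hx1]
            · simp [h, hrest u h hux]
          rw [Finset.sum_ite_eq' _ x (fun _ => 1)] at this
          split_ifs at this <;> omega
      by_cases hVsmall : ∀ v : V, v = x ∨ v = x'
      · -- V = {x, x'}, so G ≅ P₂
        left
        have hadjxx : G.Adj x x' := by
          obtain ⟨w⟩ := hc.preconnected x x'
          cases w with
          | nil => exact absurd rfl hxx'
          | cons h p =>
            rename_i b
            rcases hVsmall b with hb | hb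
            · exact absurd (hb ▸ h) G.irrefl
            · exact hb ▸ h
        have hGtop : G = ⊤ := by
          ext u v
          simp only [SimpleGraph.top_adj]
          constructor
          · exact fun h => h.ne
          · intro huv
            rcases hVsmall u with hu | hu <;> rcases hVsmall v with hv | hv <;>
              subst hu <;> subst hv
            · exact absurd rfl huv
            · exact hadjxx
            · exact hadjxx.symm
            · exact absurd rfl huv
        have hcard : Fintype.card V = 2 := by
          have hle : Fintype.card V ≤ 2 := by
            have : (univ : Finset V) ⊆ {x, x'} := fun v _ => by
              rcases hVsmall v with h | h <;> simp [h]
            calc Fintype.card V = (univ : Finset V).card := rfl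
            _ ≤ ({x, x'} : Finset V).card := Finset.card_le_card this
            _ ≤ 2 := Finset.card_insert_le _ _ |>.trans (by simp)
          omega
        have e : V ≃ Fin 2 := Fintype.equivFinOfCardEq hcard
        refine ⟨?_⟩
        rw [hGtop, SimpleGraph.pathGraph_two_eq_top]
        exact SimpleGraph.Iso.completeGraph e
      · -- there is a third vertex
        push_neg at hVsmall
        obtain ⟨v, hvx, hvx'⟩ := hVsmall
        by_cases hadjxx : G.Adj x x'
        · -- X = {x}
          right
          refine ⟨{x}, univ.erase x, ?_, ?_, Or.inl (by simp), ?_, ?_, ?_, ?_⟩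
          · simp
          · ext a; by_cases h : a = x <;> simp [h]
          · exact Finset.one_lt_card.mpr ⟨x', by simp [hxx'.symm], v, by simp [hvx], hvx'.symm⟩
          · intro a ha y hy
            rw [Finset.mem_singleton] at ha
            rw [ha]
            rw [Finset.mem_erase] at hy
            by_cases h : y = x'
            · exact h ▸ hadjxx
            · exact ((hboth y hy.1 h).1).symm
          · intro a ha b hb
            rw [Finset.mem_singleton] at ha hb
            rw [ha, hb]
            exact G.irrefl
          · intro y hy
            rw [Finset.mem_erase] at hy
            by_cases h : y = x'
            · exact ⟨v, by simp [hvx], h ▸ (hboth v hvx hvx').2.symm⟩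
            · obtain ⟨u, hadj, hu0⟩ := hf.2.2 y (hrest y hy.1 h)
              have hux : u ≠ x := fun hh => by rw [hh, hx1] at hu0; omega
              exact ⟨u, by simp [hux], hadj⟩
        · -- X = {x, x'}
          right
          refine ⟨{x, x'}, univ \ {x, x'}, ?_, ?_, Or.inr (by rw [Finset.card_insert_of_notMem (by simp [hxx'])]; simp), ?_, ?_, ?_, ?_⟩
          · exact Finset.disjoint_sdiff
          · rw [Finset.union_sdiff_of_subset (subset_univ _)]
          · -- |Y| ≥ 2
            have hvY : v ∈ univ \ ({x, x'} : Finset V) := by simp [hvx, hvx']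
            obtain ⟨u, hadj, hu0⟩ := hf.2.2 v (hrest v hvx hvx')
            have hux : u ≠ x := fun hh => by rw [hh, hx1] at hu0; omega
            have hux' : u ≠ x' := fun hh => by rw [hh, hx'1] at hu0; omega
            have huv : u ≠ v := fun h => G.irrefl (h ▸ hadj).symm
            exact Finset.one_lt_card.mpr ⟨v, hvY, u, by simp [hux, hux'], huv.symm⟩
          · intro a ha y hy
            rw [Finset.mem_sdiff] at hy
            simp at hy
            rcases Finset.mem_insert.mp ha with h | h
            · exact (h ▸ (hboth y hy.1 hy.2).1).symm
            · rw [Finset.mem_singleton] at h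
              exact (h ▸ (hboth y hy.1 hy.2).2).symm
          · intro a ha b hb
            simp only [Finset.mem_insert, Finset.mem_singleton] at ha hb
            rcases ha with rfl | rfl <;> rcases hb with rfl | rfl
            · exact G.irrefl
            · exact hadjxx
            · exact fun hh => hadjxx hh.symm
            · exact G.irrefl
          · intro y hy
            rw [Finset.mem_sdiff] at hy
            simp at hy
            obtain ⟨u, hadj, hu0⟩ := hf.2.2 y (hrest y hy.1 hy.2)
            have hux : u ≠ x := fun hh => by rw [hh, hx1] at hu0; omega
            have hux' : u ≠ x' := fun hh => by rw [hh, hx'1] at hu0; omega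
            exact ⟨u, by simp [hux, hux'], hadj⟩
  · -- backward direction
    intro h
    have hub : ∃ f : V → ℕ, IsRIDF G f ∧ ∑ v, f v = 2 := by
      rcases h with he | ⟨X, Y, hdisj, hunion, hXcard, hYcard, hbip, hXindep, hYdeg⟩
      · -- P₂ case: constant 1
        obtain ⟨e⟩ := he
        have hcard : Fintype.card V = 2 := by
          rw [Fintype.card_congr e.toEquiv, Fintype.card_fin]
        refine ⟨fun _ => 1, ⟨fun v => by norm_num, fun v hv => by simp at hv,
          fun v hv => by simp at hv⟩, ?_⟩
        simp [hcard]
      · set c : ℕ := if X.card = 1 then 2 else 1 with hcdef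
        have hXc : X.card * c = 2 := by
          rcases hXcard with h1 | h1 <;> simp [hcdef, h1]
        refine ⟨fun v => if v ∈ X then c else 0, ⟨?_, ?_, ?_⟩, ?_⟩
        · intro v
          by_cases h : v ∈ X <;> simp [h, hcdef] <;> split_ifs <;> omega
        · intro v hv
          have hvX : v ∉ X := by
            intro hvX
            simp [hvX, hcdef] at hv
            split_ifs at hv <;> omega
          have hvY : v ∈ Y := by
            have := Finset.mem_univ v
            rw [← hunion, Finset.mem_union] at this
            tauto
          have hXsub : X ⊆ univ.filter (fun u => G.Adj v u) := by
            intro a ha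
            rw [Finset.mem_filter]
            exact ⟨Finset.mem_univ a, (hbip a ha v hvY).symm⟩
          have : ∑ u ∈ X, (if u ∈ X then c else 0) ≤
              ∑ u ∈ univ.filter (fun u => G.Adj v u), (if u ∈ X then c else 0) :=
            Finset.sum_le_sum_of_subset hXsub
          have hXsum : ∑ u ∈ X, (if u ∈ X then c else 0) = 2 := by
            rw [Finset.sum_congr rfl (fun u hu => if_pos hu), Finset.sum_const, smul_eq_mul, hXc]
          show 2 ≤ ∑ u ∈ univ.filter (fun u => G.Adj v u), (if u ∈ X then c else 0)
          omega
        · intro u hu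
          have huX : u ∉ X := by
            intro huX
            simp [huX, hcdef] at hu
            split_ifs at hu <;> omega
          have huY : u ∈ Y := by
            have := Finset.mem_univ u
            rw [← hunion, Finset.mem_union] at this
            tauto
          obtain ⟨y', hy', hadj⟩ := hYdeg u huY
          have hy'X : y' ∉ X := fun hh => (Finset.disjoint_left.mp hdisj hh) hy'
          exact ⟨y', hadj, by simp [hy'X]⟩
        · rw [← Finset.sum_filter, Finset.filter_mem_eq_inter, Finset.univ_inter,
            Finset.sum_const, smul_eq_mul, hXc]
    obtain ⟨f, hf, hsum⟩ := hub
    have hlow : ∀ w ∈ {w | ∃ f : V → ℕ, IsRIDF G f ∧ ∑ v, f v = w}, 2 ≤ w := by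
      rintro w ⟨g, hg, hgsum⟩
      rw [← hgsum]
      exact ridf_lower G hn g hg
    exact le_antisymm (Nat.sInf_le ⟨f, hf, hsum⟩) (le_csInf ⟨2, f, hf, hsum⟩ hlow)
end

section
/- For every tree T, γ_r(T) = 2 if and only if T is isomorphic to P₂ or P₄. -/
open scoped Classical
open Finset

/-!
A vertex outside a restrained dominating set has a neighbour inside the set and another one
outside it, so it has degree at least 2; equivalently, every vertex with at most one neighbour
lies in every restrained dominating set. This gives `γ_r(P₂) = γ_r(P₄) = 2`.

Conversely, let `{a, b}` be a restrained dominating set of a tree on `n` vertices. The degrees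
sum to `2n - 2`, while the bound above gives at least `1 + 1 + 2 (n - 2)`, so `a` and `b` are
leaves. Every other vertex is dominated by `a` or `b`, hence is the unique neighbour of one of
them, so `T` has at most four vertices and is `P₂` or `P₄`.
-/

open SimpleGraph

section RestrainedDomination

variable {V W : Type*} [Fintype V] [Fintype W] {G : SimpleGraph V} {S : Finset V}

lemma isRDS_univ (G : SimpleGraph V) : IsRDS G univ :=
  ⟨fun v hv => absurd (mem_univ v) hv, fun v hv => absurd (mem_univ v) hv⟩

lemma IsRDS.mem_of_subsingleton_adj (hS : IsRDS G S) {v : V}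
    (hv : ∀ u w, G.Adj v u → G.Adj v w → u = w) : v ∈ S := by
  by_contra hvS
  obtain ⟨u, huS, hu⟩ := hS.1 v hvS
  obtain ⟨w, hwS, hw⟩ := hS.2 v hvS
  exact hwS (hv u w hu hw ▸ huS)

lemma IsRDS.two_le_degree (hS : IsRDS G S) {v : V} (hv : v ∉ S) : 2 ≤ G.degree v := by
  by_contra! h
  refine hv (hS.mem_of_subsingleton_adj fun u w hu hw => ?_)
  rw [← card_neighborFinset_eq_degree, Nat.lt_succ_iff, card_le_one] at h
  exact h u (by simpa using hu) w (by simpa using hw)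

lemma IsRDS.map (hS : IsRDS G S) {G' : SimpleGraph W} (e : G ≃g G') :
    IsRDS G' (S.map e.toEquiv.toEmbedding) := by
  have hmem : ∀ v, v ∉ S.map e.toEquiv.toEmbedding → e.symm v ∉ S := fun v hv hS =>
    hv (mem_map.2 ⟨_, hS, e.apply_symm_apply v⟩)
  refine ⟨fun v hv => ?_, fun v hv => ?_⟩
  · obtain ⟨u, huS, hu⟩ := hS.1 _ (hmem v hv)
    exact ⟨e u, mem_map_of_mem _ huS, by simpa using e.map_adj_iff.2 hu⟩
  · obtain ⟨u, huS, hu⟩ := hS.2 _ (hmem v hv)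
    exact ⟨e u, mt (mem_map' _).1 huS, by simpa using e.map_adj_iff.2 hu⟩

lemma rdNum_le (hS : IsRDS G S) : rdNum G ≤ #S := by
  unfold rdNum
  exact Nat.sInf_le ⟨S, hS, rfl⟩

lemma exists_isRDS_card_eq_rdNum (G : SimpleGraph V) : ∃ S, IsRDS G S ∧ #S = rdNum G :=
  Nat.sInf_mem (s := {k | ∃ S, IsRDS G S ∧ #S = k}) ⟨_, univ, isRDS_univ G, rfl⟩

lemma rdNum_le_of_iso {G' : SimpleGraph W} (e : G ≃g G') : rdNum G' ≤ rdNum G := by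
  obtain ⟨S, hS, hcard⟩ := exists_isRDS_card_eq_rdNum G
  exact (rdNum_le (hS.map e)).trans (by rw [card_map, hcard])

lemma rdNum_congr {G' : SimpleGraph W} (e : G ≃g G') : rdNum G = rdNum G' :=
  le_antisymm (rdNum_le_of_iso e.symm) (rdNum_le_of_iso e)

lemma rdNum_eq_card_of_subsingleton_adj (hS : IsRDS G S)
    (hleaf : ∀ v ∈ S, ∀ u w, G.Adj v u → G.Adj v w → u = w) : rdNum G = #S := by
  obtain ⟨R, hR, hcard⟩ := exists_isRDS_card_eq_rdNum G
  refine le_antisymm (rdNum_le hS) (hcard ▸ card_le_card fun v hv => ?_)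
  exact hR.mem_of_subsingleton_adj (hleaf v hv)

end RestrainedDomination

lemma rdNum_pathGraph_two : rdNum (pathGraph 2) = 2 := by
  rw [rdNum_eq_card_of_subsingleton_adj (isRDS_univ _)]
  · rfl
  · simp [pathGraph_adj, Fin.forall_fin_two]

lemma rdNum_pathGraph_four : rdNum (pathGraph 4) = 2 := by
  rw [rdNum_eq_card_of_subsingleton_adj (S := {0, 3})]
  · rfl
  · simp only [IsRDS, pathGraph_adj]
    decide
  · simp [pathGraph_adj, Fin.forall_fin_succ]

namespace SimpleGraph

section Isomorphisms

variable {V : Type*} {T : SimpleGraph V}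

lemma nonempty_iso_of_bijective {W : Type*} {H : SimpleGraph W} (f : W → V)
    (hf : Function.Bijective f) (hadj : ∀ i j, T.Adj (f i) (f j) ↔ H.Adj i j) :
    Nonempty (T ≃g H) :=
  ⟨(⟨Equiv.ofBijective f hf, hadj _ _⟩ : H ≃g T).symm⟩

lemma nonempty_iso_pathGraph_two {a b : V} (hab : T.Adj a b) (hcover : ∀ x, x = a ∨ x = b) :
    Nonempty (T ≃g pathGraph 2) := by
  have hne : a ≠ b := T.ne_of_adj hab
  refine nonempty_iso_of_bijective ![a, b] ⟨fun i j hij => ?_, fun x => ?_⟩ fun i j => ?_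
  · fin_cases i <;> fin_cases j <;> simp_all
  · rcases hcover x with rfl | rfl
    exacts [⟨0, rfl⟩, ⟨1, rfl⟩]
  · fin_cases i <;> fin_cases j <;> simp [pathGraph_adj, hab, hab.symm]

lemma nonempty_iso_pathGraph_four {a b va vb : V} (ha : ∀ x, T.Adj a x ↔ x = va)
    (hb : ∀ x, T.Adj b x ↔ x = vb) (hm : T.Adj va vb) (hab : ¬T.Adj a b)
    (hcover : ∀ x, x = a ∨ x = b ∨ x = va ∨ x = vb) :
    Nonempty (T ≃g pathGraph 4) := by
  have ha' : ∀ x, T.Adj x a ↔ x = va := fun x => by rw [T.adj_comm]; exact ha x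
  have hb' : ∀ x, T.Adj x b ↔ x = vb := fun x => by rw [T.adj_comm]; exact hb x
  have h1 : a ≠ va := T.ne_of_adj ((ha va).2 rfl)
  have h2 : va ≠ vb := T.ne_of_adj hm
  have h3 : vb ≠ b := T.ne_of_adj ((hb' vb).2 rfl)
  have h4 : a ≠ vb := fun h => hab ((hb' a).2 h)
  have h5 : va ≠ b := fun h => hab ((ha b).2 h.symm)
  have h6 : a ≠ b := fun h => h2 ((ha vb).1 (h ▸ (hb vb).2 rfl)).symm
  refine nonempty_iso_of_bijective ![a, va, vb, b] ⟨fun i j hij => ?_, fun x => ?_⟩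
    fun i j => ?_
  · fin_cases i <;> fin_cases j <;>
      simp_all [h1.symm, h2.symm, h3.symm, h4.symm, h5.symm, h6.symm]
  · rcases hcover x with rfl | rfl | rfl | rfl
    exacts [⟨0, rfl⟩, ⟨3, rfl⟩, ⟨1, rfl⟩, ⟨2, rfl⟩]
  · fin_cases i <;> fin_cases j <;>
      simp [pathGraph_adj, ha, hb, ha', hb', hm, hm.symm, h2, h4, h2.symm, h5.symm]

end Isomorphisms

variable {V : Type*} [Fintype V] {T : SimpleGraph V}

lemma IsTree.degree_eq_one_of_two_le_degree (hT : T.IsTree) {S : Finset V}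
    (hS : #S = 2) (h : ∀ v ∉ S, 2 ≤ T.degree v) {v : V} (hv : v ∈ S) : T.degree v = 1 := by
  obtain ⟨a, b, hab, -⟩ := card_eq_two.1 hS
  have : Nontrivial V := ⟨⟨a, b, hab⟩⟩
  set g : V → ℕ := fun v => if v ∈ S then 1 else 2
  have hle : ∀ v, g v ≤ T.degree v := fun v => by
    by_cases hv : v ∈ S
    · simpa [g, hv] using Nat.one_le_of_lt (hT.connected.preconnected.degree_pos_of_nontrivial v)
    · simpa [g, hv] using h v hv
  have hsum : ∑ v, g v = ∑ v, T.degree v := by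
    have := hT.card_edgeFinset
    have := card_le_univ S
    simp [g, sum_ite, sum_degrees_eq_twice_card_edges, filter_notMem_eq_sdiff, card_sdiff, hS]
    omega
  have := (sum_eq_sum_iff_of_le fun v _ => hle v).1 hsum v (mem_univ v)
  simpa [g, hv] using this.symm

lemma IsTree.nonempty_iso_pathGraph_of_isRDS_pair (hT : T.IsTree) {a b : V}
    (hab : a ≠ b) (hS : IsRDS T {a, b}) :
    Nonempty (T ≃g pathGraph 2) ∨ Nonempty (T ≃g pathGraph 4) := by
  have hleaf : ∀ v ∈ ({a, b} : Finset V), ∃ w, ∀ x, T.Adj v x ↔ x = w := fun v hv => by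
    obtain ⟨w, hw, huniq⟩ := degree_eq_one_iff_existsUnique_adj.1 <|
      hT.degree_eq_one_of_two_le_degree (card_pair hab) (fun _ => hS.two_le_degree) hv
    exact ⟨w, fun x => ⟨huniq x, fun hx => hx ▸ hw⟩⟩
  obtain ⟨va, ha⟩ := hleaf a (by simp)
  obtain ⟨vb, hb⟩ := hleaf b (by simp)
  have hcover : ∀ x, x = a ∨ x = b ∨ x = va ∨ x = vb := fun x => by
    by_contra! hx
    obtain ⟨s, hs, hxs⟩ := hS.1 x (by simp [hx.1, hx.2.1])
    simp only [mem_insert, mem_singleton] at hs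
    rcases hs with rfl | rfl
    · exact hx.2.2.1 ((ha x).1 hxs.symm)
    · exact hx.2.2.2 ((hb x).1 hxs.symm)
  by_cases hadj : T.Adj a b
  · refine .inl (nonempty_iso_pathGraph_two hadj fun x => ?_)
    rw [← (ha b).1 hadj, ← (hb a).1 hadj.symm] at hcover
    rcases hcover x with h | h | h | h <;> simp [h]
  · have hva : va ∉ ({a, b} : Finset V) := by
      simp only [mem_insert, mem_singleton, not_or]
      exact ⟨fun h => T.irrefl ((ha a).2 h.symm), fun h => hadj ((ha b).2 h.symm)⟩
    obtain ⟨u, hu, hvau⟩ := hS.2 va hva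
    have hm : T.Adj va vb := by
      rcases hcover u with rfl | rfl | rfl | rfl
      · simp at hu
      · simp at hu
      · exact absurd hvau T.irrefl
      · exact hvau
    exact .inr (nonempty_iso_pathGraph_four ha hb hm hadj hcover)

end SimpleGraph

theorem stmt14 {V : Type*} [Fintype V] (T : SimpleGraph V) (hT : T.IsTree) :
    rdNum T = 2 ↔
      (Nonempty (T ≃g SimpleGraph.pathGraph 2) ∨ Nonempty (T ≃g SimpleGraph.pathGraph 4)) := by
  constructor
  · intro h
    obtain ⟨S, hS, hcard⟩ := exists_isRDS_card_eq_rdNum T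
    obtain ⟨a, b, hab, rfl⟩ := card_eq_two.1 (hcard.trans h)
    exact hT.nonempty_iso_pathGraph_of_isRDS_pair hab hS
  · rintro (h | h)
    · rw [rdNum_congr h.some, rdNum_pathGraph_two]
    · rw [rdNum_congr h.some, rdNum_pathGraph_four]
end

section
/- Let T be the spider obtained from the star K_{1,a-1} (a ≥ 2) by subdividing each edge exactly twice. Then γ_r(T) = a and γ_{rI}(T) = 2a. -/
open scoped Classical
open Finset

/-- The spider obtained from `K_{1,a-1}` by subdividing each edge twice: a center together
with `a-1` legs, each a path on three new vertices. -/
def spider (a : ℕ) : SimpleGraph (Unit ⊕ Fin (a - 1) × Fin 3) :=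
  SimpleGraph.fromRel (fun p q =>
    (∃ i, p = Sum.inl () ∧ q = Sum.inr (i, 0)) ∨
    (∃ i, p = Sum.inr (i, 0) ∧ q = Sum.inr (i, 1)) ∨
    (∃ i, p = Sum.inr (i, 1) ∧ q = Sum.inr (i, 2)))

section Aux

set_option linter.unnecessarySeqFocus false

lemma spider_adj_c0 (a : ℕ) (i : Fin (a-1)) :
    (spider a).Adj (Sum.inl ()) (Sum.inr (i, 0)) := by
  rw [spider, SimpleGraph.fromRel_adj]
  exact ⟨by simp, Or.inl (Or.inl ⟨i, rfl, rfl⟩)⟩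

lemma spider_adj_01 (a : ℕ) (i : Fin (a-1)) :
    (spider a).Adj (Sum.inr (i, 0)) (Sum.inr (i, 1)) := by
  rw [spider, SimpleGraph.fromRel_adj]
  exact ⟨by simp, Or.inl (Or.inr (Or.inl ⟨i, rfl, rfl⟩))⟩

lemma spider_adj_12 (a : ℕ) (i : Fin (a-1)) :
    (spider a).Adj (Sum.inr (i, 1)) (Sum.inr (i, 2)) := by
  rw [spider, SimpleGraph.fromRel_adj]
  exact ⟨by simp, Or.inl (Or.inr (Or.inr ⟨i, rfl, rfl⟩))⟩

lemma spider_nbr_center (a : ℕ) :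
    univ.filter (fun u => (spider a).Adj (Sum.inl ()) u)
      = univ.image (fun i : Fin (a-1) => (Sum.inr (i, 0) : Unit ⊕ Fin (a-1) × Fin 3)) := by
  ext u
  rcases u with _ | ⟨j, k⟩ <;>
    simp [spider, SimpleGraph.fromRel_adj, Prod.ext_iff] <;> aesop

lemma spider_nbr0 (a : ℕ) (i : Fin (a-1)) :
    univ.filter (fun u => (spider a).Adj (Sum.inr (i, 0)) u)
      = {Sum.inl (), Sum.inr (i, 1)} := by
  ext u
  rcases u with _ | ⟨j, k⟩ <;>
    simp [spider, SimpleGraph.fromRel_adj, Prod.ext_iff] <;> aesop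

lemma spider_nbr1 (a : ℕ) (i : Fin (a-1)) :
    univ.filter (fun u => (spider a).Adj (Sum.inr (i, 1)) u)
      = {Sum.inr (i, 0), Sum.inr (i, 2)} := by
  ext u
  rcases u with _ | ⟨j, k⟩ <;>
    simp [spider, SimpleGraph.fromRel_adj, Prod.ext_iff] <;> aesop

lemma spider_nbr2 (a : ℕ) (i : Fin (a-1)) :
    univ.filter (fun u => (spider a).Adj (Sum.inr (i, 2)) u)
      = {Sum.inr (i, 1)} := by
  ext u
  rcases u with _ | ⟨j, k⟩ <;>
    simp [spider, SimpleGraph.fromRel_adj, Prod.ext_iff] <;> aesop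

lemma spider_adj2_eq {a : ℕ} {i : Fin (a-1)} {u} (h : (spider a).Adj (Sum.inr (i, 2)) u) :
    u = Sum.inr (i, 1) := by
  have hm : u ∈ univ.filter (fun u => (spider a).Adj (Sum.inr (i, 2)) u) :=
    mem_filter.mpr ⟨mem_univ _, h⟩
  rw [spider_nbr2] at hm; simpa using hm

lemma spider_adj1_eq {a : ℕ} {i : Fin (a-1)} {u} (h : (spider a).Adj (Sum.inr (i, 1)) u) :
    u = Sum.inr (i, 0) ∨ u = Sum.inr (i, 2) := by
  have hm : u ∈ univ.filter (fun u => (spider a).Adj (Sum.inr (i, 1)) u) :=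
    mem_filter.mpr ⟨mem_univ _, h⟩
  rw [spider_nbr1] at hm; simpa using hm

lemma spider_adj0_eq {a : ℕ} {i : Fin (a-1)} {u} (h : (spider a).Adj (Sum.inr (i, 0)) u) :
    u = Sum.inl () ∨ u = Sum.inr (i, 1) := by
  have hm : u ∈ univ.filter (fun u => (spider a).Adj (Sum.inr (i, 0)) u) :=
    mem_filter.mpr ⟨mem_univ _, h⟩
  rw [spider_nbr0] at hm; simpa using hm

lemma spider_sum_V (a : ℕ) (f : Unit ⊕ Fin (a-1) × Fin 3 → ℕ) :
    ∑ v, f v = f (Sum.inl ())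
      + ∑ i : Fin (a-1), (f (Sum.inr (i,0)) + f (Sum.inr (i,1)) + f (Sum.inr (i,2))) := by
  rw [Fintype.sum_sum_type]
  simp [Fintype.sum_prod_type, Fin.sum_univ_three, add_assoc]

lemma leaf_inj (a : ℕ) :
    Function.Injective (fun i : Fin (a-1) => (Sum.inr (i,2) : Unit ⊕ Fin (a-1) × Fin 3)) := by
  intro i j h; simpa using h

lemma rd_lower (a : ℕ) (ha : 2 ≤ a) (S : Finset (Unit ⊕ Fin (a-1) × Fin 3))
    (hS : IsRDS (spider a) S) : a ≤ S.card := by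
  have hleaf : ∀ i : Fin (a-1), (Sum.inr (i,2) : Unit ⊕ Fin (a-1) × Fin 3) ∈ S := by
    intro i
    by_contra h
    obtain ⟨u, huS, hadj⟩ := hS.1 _ h
    obtain ⟨u', hu'S, hadj'⟩ := hS.2 _ h
    rw [spider_adj2_eq hadj] at huS
    rw [spider_adj2_eq hadj'] at hu'S
    exact hu'S huS
  have hn : 0 < a - 1 := by omega
  have hx : ∃ x ∈ S, x ∉ univ.image
      (fun i : Fin (a-1) => (Sum.inr (i,2) : Unit ⊕ Fin (a-1) × Fin 3)) := by
    by_cases h0 : (Sum.inr (⟨0, hn⟩, (0:Fin 3)) : Unit ⊕ Fin (a-1) × Fin 3) ∈ S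
    · exact ⟨_, h0, by simp [Prod.ext_iff]⟩
    · obtain ⟨u, huS, hadj⟩ := hS.1 _ h0
      rcases spider_adj0_eq hadj with rfl | rfl
      · exact ⟨_, huS, by simp⟩
      · exact ⟨_, huS, by simp [Prod.ext_iff]⟩
  obtain ⟨x, hxS, hxL⟩ := hx
  have hsub : insert x (univ.image
      (fun i : Fin (a-1) => (Sum.inr (i,2) : Unit ⊕ Fin (a-1) × Fin 3))) ⊆ S := by
    intro y hy
    rcases mem_insert.mp hy with rfl | hy
    · exact hxS
    · obtain ⟨i, _, rfl⟩ := mem_image.mp hy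
      exact hleaf i
  have hc := card_le_card hsub
  rw [card_insert_of_notMem hxL, card_image_of_injective _ (leaf_inj a)] at hc
  simp only [card_univ, Fintype.card_fin] at hc
  omega

lemma rd_upper (a : ℕ) (ha : 2 ≤ a) :
    ∃ S : Finset (Unit ⊕ Fin (a-1) × Fin 3), IsRDS (spider a) S ∧ S.card = a := by
  refine ⟨insert (Sum.inl ()) (univ.image
      (fun i : Fin (a-1) => (Sum.inr (i,2) : Unit ⊕ Fin (a-1) × Fin 3))), ⟨?_, ?_⟩, ?_⟩
  · intro v hv
    rcases v with _ | ⟨j, k⟩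
    · exact absurd (mem_insert_self _ _) hv
    · fin_cases k
      · exact ⟨Sum.inl (), mem_insert_self _ _, (spider_adj_c0 a j).symm⟩
      · exact ⟨Sum.inr (j, 2), by simp, spider_adj_12 a j⟩
      · exact absurd (by simp) hv
  · intro v hv
    rcases v with _ | ⟨j, k⟩
    · exact absurd (mem_insert_self _ _) hv
    · fin_cases k
      · exact ⟨Sum.inr (j, 1), by simp [Prod.ext_iff], spider_adj_01 a j⟩
      · exact ⟨Sum.inr (j, 0), by simp [Prod.ext_iff], (spider_adj_01 a j).symm⟩
      · exact absurd (by simp) hv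
  · rw [card_insert_of_notMem (by simp), card_image_of_injective _ (leaf_inj a)]
    simp only [card_univ, Fintype.card_fin]
    omega

lemma rid_lower (a : ℕ) (ha : 2 ≤ a) (f : Unit ⊕ Fin (a-1) × Fin 3 → ℕ)
    (hf : IsRIDF (spider a) f) : 2 * a ≤ ∑ v, f v := by
  obtain ⟨hle, hw, hres⟩ := hf
  have h2pos : ∀ i : Fin (a-1), 1 ≤ f (Sum.inr (i,2)) := by
    intro i
    by_contra h
    have h0 : f (Sum.inr (i,2)) = 0 := by omega
    obtain ⟨u, hadj, hu⟩ := hres _ h0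
    rw [spider_adj2_eq hadj] at hu
    have hwt := hw _ h0
    rw [spider_nbr2, sum_singleton] at hwt
    omega
  have hWlb : ∀ i : Fin (a-1),
      2 ≤ f (Sum.inr (i,0)) + f (Sum.inr (i,1)) + f (Sum.inr (i,2)) := by
    intro i
    rcases Nat.eq_zero_or_pos (f (Sum.inr (i,1))) with h | h
    · have hwt := hw _ h
      rw [spider_nbr1, sum_pair (by simp [Prod.ext_iff])] at hwt
      omega
    · have := h2pos i; omega
  have hS2 : 2 * (a-1) ≤
      ∑ i : Fin (a-1), (f (Sum.inr (i,0)) + f (Sum.inr (i,1)) + f (Sum.inr (i,2))) := by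
    calc 2 * (a-1) = ∑ _i : Fin (a-1), 2 := by
          simp [Finset.sum_const, Finset.card_univ, mul_comm]
      _ ≤ _ := Finset.sum_le_sum (fun i _ => hWlb i)
  rw [spider_sum_V]
  by_cases hB : ∀ i : Fin (a-1), 1 ≤ f (Sum.inr (i,1))
  · by_cases hc2 : 2 ≤ f (Sum.inl ())
    · omega
    by_cases hc0 : f (Sum.inl ()) = 0
    · have hwt := hw _ hc0
      rw [spider_nbr_center,
        Finset.sum_image (fun i _ j _ h => by simpa using h)] at hwt
      have hmono : ∑ i : Fin (a-1), (f (Sum.inr (i,0)) + 2) ≤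
          ∑ i : Fin (a-1), (f (Sum.inr (i,0)) + f (Sum.inr (i,1)) + f (Sum.inr (i,2))) :=
        Finset.sum_le_sum (fun i _ => by have := h2pos i; have := hB i; omega)
      rw [Finset.sum_add_distrib] at hmono
      have hconst : ∑ _i : Fin (a-1), (2:ℕ) = 2 * (a-1) := by
        simp [Finset.sum_const, Finset.card_univ, mul_comm]
      omega
    · -- f (inl) = 1
      have hc1 : f (Sum.inl ()) = 1 := by omega
      have h0pos : ∀ i : Fin (a-1), 1 ≤ f (Sum.inr (i,0)) := by
        intro i
        by_contra h
        have h0 : f (Sum.inr (i,0)) = 0 := by omega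
        obtain ⟨u, hadj, hu⟩ := hres _ h0
        rcases spider_adj0_eq hadj with rfl | rfl
        · omega
        · have := hB i; omega
      have hmono : ∑ _i : Fin (a-1), (3:ℕ) ≤
          ∑ i : Fin (a-1), (f (Sum.inr (i,0)) + f (Sum.inr (i,1)) + f (Sum.inr (i,2))) :=
        Finset.sum_le_sum (fun i _ => by
          have := h2pos i; have := hB i; have := h0pos i; omega)
      have hconst : ∑ _i : Fin (a-1), (3:ℕ) = 3 * (a-1) := by
        simp [Finset.sum_const, Finset.card_univ, mul_comm]
      omega
  · push_neg at hB
    obtain ⟨i, hi⟩ := hB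
    have hi0 : f (Sum.inr (i,1)) = 0 := by omega
    obtain ⟨u, hadj, hu⟩ := hres _ hi0
    rcases spider_adj1_eq hadj with rfl | rfl
    · have hwc := hw _ hu
      rw [spider_nbr0, sum_pair (by simp)] at hwc
      omega
    · have := h2pos i; omega

lemma rid_upper (a : ℕ) (ha : 2 ≤ a) :
    ∃ f : Unit ⊕ Fin (a-1) × Fin 3 → ℕ, IsRIDF (spider a) f ∧ ∑ v, f v = 2 * a := by
  refine ⟨Sum.elim (fun _ => 2) (fun p => if p.2 = 2 then 2 else 0), ⟨?_, ?_, ?_⟩, ?_⟩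
  · intro v
    rcases v with _ | ⟨j, k⟩
    · simp
    · simp only [Sum.elim_inr]
      split_ifs <;> omega
  · intro v hv
    rcases v with _ | ⟨j, k⟩
    · simp at hv
    · have hk : k = 0 ∨ k = 1 ∨ k = 2 := by omega
      rcases hk with rfl | rfl | rfl
      · rw [spider_nbr0, sum_pair (by simp)]
        simp
      · rw [spider_nbr1, sum_pair (by simp [Prod.ext_iff])]
        simp
      · simp at hv
  · intro v hv
    rcases v with _ | ⟨j, k⟩
    · simp at hv
    · have hk : k = 0 ∨ k = 1 ∨ k = 2 := by omega
      rcases hk with rfl | rfl | rfl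
      · exact ⟨Sum.inr (j, 1), spider_adj_01 a j, by simp⟩
      · exact ⟨Sum.inr (j, 0), (spider_adj_01 a j).symm, by simp⟩
      · simp at hv
  · rw [spider_sum_V]
    simp only [Sum.elim_inl, Sum.elim_inr]
    norm_num [Fin.ext_iff, Finset.sum_const, Finset.card_univ]
    omega

end Aux

theorem stmt16 (a : ℕ) (ha : 2 ≤ a) :
    rdNum (spider a) = a ∧ ridNum (spider a) = 2 * a := by
  constructor
  · obtain ⟨S, hS, hcard⟩ := rd_upper a ha
    have hmem : a ∈ {k | ∃ S : Finset (Unit ⊕ Fin (a-1) × Fin 3),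
        IsRDS (spider a) S ∧ S.card = k} := ⟨S, hS, hcard⟩
    refine le_antisymm (Nat.sInf_le hmem) (le_csInf ⟨a, hmem⟩ ?_)
    rintro k ⟨T, hT, rfl⟩
    exact rd_lower a ha T hT
  · obtain ⟨f, hf, hsum⟩ := rid_upper a ha
    have hmem : 2 * a ∈ {w | ∃ f : Unit ⊕ Fin (a-1) × Fin 3 → ℕ,
        IsRIDF (spider a) f ∧ ∑ v, f v = w} := ⟨f, hf, hsum⟩
    refine le_antisymm (Nat.sInf_le hmem) (le_csInf ⟨2 * a, hmem⟩ ?_)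
    rintro k ⟨g, hg, rfl⟩
    exact rid_lower a ha g hg
end

section
/- Let T_{4,k} (k ≥ 1) be the tree obtained from k disjoint copies of the star K_{1,3} (the i-th copy having center u_i and leaves v_i, w_i, x_i) by adding a new vertex z adjacent to x_i for all i. Then γ_{rI}(T_{4,k}) = 2k + 2 = (|V(T_{4,k})| + 3)/2. -/
open scoped Classical
open Finset

/-- `T_{4,k}`: `k` copies of `K_{1,3}` (copy `i` has center `(i,0)` and leaves
`(i,1),(i,2),(i,3)`) together with a new vertex `z = inl ()` joined to each `(i,3)`. -/
def T4 (k : ℕ) : SimpleGraph (Unit ⊕ Fin k × Fin 4) :=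
  SimpleGraph.fromRel (fun p q =>
    (∃ i j, j ≠ 0 ∧ p = Sum.inr (i, 0) ∧ q = Sum.inr (i, j)) ∨
    (∃ i, p = Sum.inl () ∧ q = Sum.inr (i, 3)))


lemma adj_center {k : ℕ} (i : Fin k) (j : Fin 4) (hj : j ≠ 0) :
    (T4 k).Adj (Sum.inr (i, 0)) (Sum.inr (i, j)) := by
  rw [T4, SimpleGraph.fromRel_adj]
  exact ⟨by simp [hj.symm], Or.inl (Or.inl ⟨i, j, hj, rfl, rfl⟩)⟩

lemma adj_zx {k : ℕ} (i : Fin k) : (T4 k).Adj (Sum.inl ()) (Sum.inr (i, 3)) := by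
  rw [T4, SimpleGraph.fromRel_adj]
  exact ⟨by simp, Or.inl (Or.inr ⟨i, rfl, rfl⟩)⟩

noncomputable def F (k : ℕ) : Unit ⊕ Fin k × Fin 4 → ℕ :=
  Sum.elim (fun _ => 2) (fun q => if q.2 = 1 ∨ q.2 = 2 then 1 else 0)

lemma F_z {k : ℕ} : F k (Sum.inl ()) = 2 := rfl
lemma F_0 {k : ℕ} (i : Fin k) : F k (Sum.inr (i, 0)) = 0 := by simp only [F, Sum.elim_inr]; rw [if_neg (by decide)]
lemma F_1 {k : ℕ} (i : Fin k) : F k (Sum.inr (i, 1)) = 1 := by simp only [F, Sum.elim_inr]; rw [if_pos (by decide)]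
lemma F_2 {k : ℕ} (i : Fin k) : F k (Sum.inr (i, 2)) = 1 := by simp only [F, Sum.elim_inr]; rw [if_pos (by decide)]
lemma F_3 {k : ℕ} (i : Fin k) : F k (Sum.inr (i, 3)) = 0 := by simp only [F, Sum.elim_inr]; rw [if_neg (by decide)]

lemma F_sum (k : ℕ) : ∑ v, F k v = 2 * k + 2 := by
  rw [Fintype.sum_sum_type, Fintype.sum_prod_type]
  simp only [Fin.sum_univ_four, F_0, F_1, F_2, F_3]
  simp [Finset.sum_const, Finset.card_univ, F_z]
  ring

lemma F_ridf (k : ℕ) : IsRIDF (T4 k) (F k) := by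
  refine ⟨?_, ?_, ?_⟩
  · rintro (u | ⟨i, j⟩)
    · exact le_refl 2
    · show (if _ then 1 else 0) ≤ 2
      split <;> omega
  · rintro (u | ⟨i, j⟩) h
    · simp [F] at h
    · fin_cases j
      · have hsub : ({Sum.inr (i, 1), Sum.inr (i, 2)} : Finset (Unit ⊕ Fin k × Fin 4)) ⊆
            Finset.univ.filter (fun u => (T4 k).Adj (Sum.inr (i, 0)) u) := by
          intro u hu
          simp only [mem_insert, mem_singleton] at hu
          rcases hu with rfl | rfl
          · simpa using adj_center i 1 (by decide)
          · simpa using adj_center i 2 (by decide)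
        calc (2 : ℕ) = ∑ u ∈ ({Sum.inr (i, 1), Sum.inr (i, 2)} :
              Finset (Unit ⊕ Fin k × Fin 4)), F k u := by
              rw [Finset.sum_pair (by simp)]
              rw [F_1, F_2]
          _ ≤ _ := Finset.sum_le_sum_of_subset hsub
      · simp [F, Fin.ext_iff] at h
      · simp [F, Fin.ext_iff] at h
      · have hz : Sum.inl () ∈ Finset.univ.filter
            (fun u => (T4 k).Adj (Sum.inr (i, 3)) u) := by
          simp [(adj_zx i).symm]
        calc (2 : ℕ) = F k (Sum.inl ()) := rfl
          _ ≤ _ := Finset.single_le_sum (fun _ _ => Nat.zero_le _) hz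
  · rintro (u | ⟨i, j⟩) h
    · simp [F] at h
    · fin_cases j
      · exact ⟨Sum.inr (i, 3), adj_center i 3 (by decide), F_3 i⟩
      · simp [F, Fin.ext_iff] at h
      · simp [F, Fin.ext_iff] at h
      · exact ⟨Sum.inr (i, 0), (adj_center i 3 (by decide)).symm, F_0 i⟩
lemma adj_leaf {k : ℕ} (i : Fin k) (j : Fin 4) (h1 : j ≠ 0) (h3 : j ≠ 3) (u) :
    (T4 k).Adj (Sum.inr (i, j)) u → u = Sum.inr (i, 0) := by
  intro h
  rw [T4, SimpleGraph.fromRel_adj] at h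
  obtain ⟨hne, h | h⟩ := h <;>
    rcases h with ⟨i', j', hj', hp, hq⟩ | ⟨i', hp, hq⟩ <;> simp_all

lemma adj_x {k : ℕ} (i : Fin k) (u) :
    (T4 k).Adj (Sum.inr (i, 3)) u → u = Sum.inr (i, 0) ∨ u = Sum.inl () := by
  intro h
  rw [T4, SimpleGraph.fromRel_adj] at h
  obtain ⟨hne, h | h⟩ := h <;>
    rcases h with ⟨i', j', hj', hp, hq⟩ | ⟨i', hp, hq⟩ <;> simp_all

lemma adj_z {k : ℕ} (u) :
    (T4 k).Adj (Sum.inl ()) u → ∃ i, u = Sum.inr (i, 3) := by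
  intro h
  rw [T4, SimpleGraph.fromRel_adj] at h
  obtain ⟨hne, h | h⟩ := h <;>
    rcases h with ⟨i', j', hj', hp, hq⟩ | ⟨i', hp, hq⟩ <;> simp_all

lemma lower_bound {k : ℕ} (hk : 1 ≤ k) (f : Unit ⊕ Fin k × Fin 4 → ℕ)
    (hf : IsRIDF (T4 k) f) : 2 * k + 2 ≤ ∑ v, f v := by
  obtain ⟨hf2, hdom, hres⟩ := hf
  -- each of the two pendant leaves gets weight ≥ 1
  have h1 : ∀ (i : Fin k) (j : Fin 4), j ≠ 0 → j ≠ 3 → 1 ≤ f (Sum.inr (i, j)) := by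
    intro i j hj0 hj3
    by_contra hcon
    have h0 : f (Sum.inr (i, j)) = 0 := by omega
    obtain ⟨u, hu, hu0⟩ := hres _ h0
    have := adj_leaf i j hj0 hj3 u hu
    subst this
    have hd := hdom _ h0
    have hsub : Finset.univ.filter (fun u => (T4 k).Adj (Sum.inr (i, j)) u) ⊆
        {Sum.inr (i, 0)} := by
      intro u hu
      simp only [mem_filter, mem_univ, true_and] at hu
      simp [adj_leaf i j hj0 hj3 u hu]
    have hle : ∑ u ∈ Finset.univ.filter (fun u => (T4 k).Adj (Sum.inr (i, j)) u), f u ≤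
        f (Sum.inr (i, 0)) := by
      calc _ ≤ ∑ u ∈ ({Sum.inr (i, 0)} : Finset (Unit ⊕ Fin k × Fin 4)), f u :=
            Finset.sum_le_sum_of_subset hsub
        _ = f (Sum.inr (i, 0)) := Finset.sum_singleton _ _
    omega
  have h2 : 2 ≤ f (Sum.inl ()) + ∑ i, (f (Sum.inr (i, 0)) + f (Sum.inr (i, 3))) := by
    by_contra hcon
    push_neg at hcon
    by_cases hC : ∀ i, f (Sum.inr (i, 3)) = 0
    · set i0 : Fin k := ⟨0, hk⟩
      have hd := hdom _ (hC i0)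
      have hsub : Finset.univ.filter (fun u => (T4 k).Adj (Sum.inr (i0, 3)) u) ⊆
          {Sum.inr (i0, 0), Sum.inl ()} := by
        intro u hu
        simp only [mem_filter, mem_univ, true_and] at hu
        rcases adj_x i0 u hu with rfl | rfl <;> simp
      have hle : ∑ u ∈ Finset.univ.filter (fun u => (T4 k).Adj (Sum.inr (i0, 3)) u), f u ≤
          f (Sum.inr (i0, 0)) + f (Sum.inl ()) := by
        calc _ ≤ ∑ u ∈ ({Sum.inr (i0, 0), Sum.inl ()} : Finset (Unit ⊕ Fin k × Fin 4)), f u :=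
              Finset.sum_le_sum_of_subset hsub
          _ = f (Sum.inr (i0, 0)) + f (Sum.inl ()) := Finset.sum_pair (by simp)
      have hmem : f (Sum.inr (i0, 0)) + f (Sum.inr (i0, 3)) ≤
          ∑ i, (f (Sum.inr (i, 0)) + f (Sum.inr (i, 3))) :=
        Finset.single_le_sum (f := fun i => f (Sum.inr (i, 0)) + f (Sum.inr (i, 3))) (fun _ _ => Nat.zero_le _) (mem_univ i0)
      omega
    · push_neg at hC
      obtain ⟨j, hj⟩ := hC
      have hmemj : f (Sum.inr (j, 0)) + f (Sum.inr (j, 3)) ≤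
          ∑ i, (f (Sum.inr (i, 0)) + f (Sum.inr (i, 3))) :=
        Finset.single_le_sum (f := fun i => f (Sum.inr (i, 0)) + f (Sum.inr (i, 3))) (fun _ _ => Nat.zero_le _) (mem_univ j)
      have hA : f (Sum.inl ()) = 0 := by omega
      have hd := hdom _ hA
      have hsub : Finset.univ.filter (fun u => (T4 k).Adj (Sum.inl ()) u) ⊆
          Finset.univ.image (fun i => (Sum.inr (i, 3) : Unit ⊕ Fin k × Fin 4)) := by
        intro u hu
        simp only [mem_filter, mem_univ, true_and] at hu
        obtain ⟨i, rfl⟩ := adj_z u hu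
        exact mem_image_of_mem _ (mem_univ i)
      have hle : ∑ u ∈ Finset.univ.filter (fun u => (T4 k).Adj (Sum.inl ()) u), f u ≤
          ∑ i, f (Sum.inr (i, 3)) := by
        calc _ ≤ ∑ u ∈ Finset.univ.image
              (fun i => (Sum.inr (i, 3) : Unit ⊕ Fin k × Fin 4)), f u :=
              Finset.sum_le_sum_of_subset hsub
          _ = ∑ i, f (Sum.inr (i, 3)) :=
              Finset.sum_image (by intro a _ b _ h; simpa using h)
      have hS : ∑ i, f (Sum.inr (i, 3)) ≤
          ∑ i, (f (Sum.inr (i, 0)) + f (Sum.inr (i, 3))) :=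
        Finset.sum_le_sum (fun i _ => Nat.le_add_left _ _)
      omega
  have hsplit : ∑ v, f v = f (Sum.inl ()) +
      ∑ i, (f (Sum.inr (i, 0)) + f (Sum.inr (i, 1)) + f (Sum.inr (i, 2)) + f (Sum.inr (i, 3))) := by
    rw [Fintype.sum_sum_type, Fintype.sum_prod_type]
    simp [Fin.sum_univ_four]
  have hre : ∑ i, (f (Sum.inr (i, 0)) + f (Sum.inr (i, 1)) + f (Sum.inr (i, 2)) + f (Sum.inr (i, 3)))
      = ∑ i, (f (Sum.inr (i, 0)) + f (Sum.inr (i, 3)))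
        + ∑ i, (f (Sum.inr (i, 1)) + f (Sum.inr (i, 2))) := by
    rw [← Finset.sum_add_distrib]
    exact Finset.sum_congr rfl fun i _ => by ring
  have hS2 : 2 * k ≤ ∑ i, (f (Sum.inr (i, 1)) + f (Sum.inr (i, 2))) := by
    calc 2 * k = ∑ _i : Fin k, 2 := by simp [mul_comm]
      _ ≤ _ := Finset.sum_le_sum fun i _ =>
          Nat.add_le_add (h1 i 1 (by decide) (by decide)) (h1 i 2 (by decide) (by decide))
  omega

theorem stmt17 (k : ℕ) (hk : 1 ≤ k) :
    ridNum (T4 k) = 2 * k + 2 ∧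
    2 * (2 * k + 2) = Fintype.card (Unit ⊕ Fin k × Fin 4) + 3 := by
  constructor
  · have hmem : 2 * k + 2 ∈ {w | ∃ f : Unit ⊕ Fin k × Fin 4 → ℕ,
        IsRIDF (T4 k) f ∧ ∑ v, f v = w} := ⟨F k, F_ridf k, F_sum k⟩
    have hub : ridNum (T4 k) ≤ 2 * k + 2 := Nat.sInf_le hmem
    have hmem' := Nat.sInf_mem ⟨_, hmem⟩
    obtain ⟨f, hf, hsum⟩ := hmem'
    have hlb := lower_bound hk f hf
    rw [hsum] at hlb
    exact le_antisymm hub hlb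
  · simp [Fintype.card_sum, Fintype.card_prod]
    ring
end
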